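/- arXiv:2006.05284 — 4 statements merged into one kernel-verified Lean document; each statement's English description precedes it below -/
import Mathlib

section
/- For d ≥ 0, a scaling 𝔰 ∈ ℕ^{d+1}, α, β ∈ ℝ₊, a point x ∈ ℝ^{d+1} and smooth functions f, g : ℝ^{d+1} → ℝ, the Taylor jet operators T_{α,x,y} f := ∑_{ℓ ∈ ℕ^{d+1}, |ℓ|_𝔰 < α} (y−x)^ℓ/ℓ! · (D^ℓ f)(x) satisfy the Rota–Baxter family identity: (T_{α,x,·} f)(T_{β,x,·} g) = T_{α+β,x,·}[ (T_{α,x,·} f)·g + f·(T_{β,x,·} g) − f·g ]. -/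
open scoped BigOperators

/-- Partial derivative of `f : ℝ^{d+1} → ℝ` in the `i`-th coordinate direction. -/
noncomputable def pderiv' {n : ℕ} (i : Fin n) (f : (Fin n → ℝ) → ℝ) :
    (Fin n → ℝ) → ℝ :=
  fun x => fderiv ℝ f x (Pi.single i 1)

/-- Mixed partial derivative `D^ℓ` of multi-order `ℓ`. -/
noncomputable def mderiv {n : ℕ} (ℓ : Fin n → ℕ) (f : (Fin n → ℝ) → ℝ) :
    (Fin n → ℝ) → ℝ :=
  (((List.finRange n).map fun i => (pderiv' i)^[ℓ i]).foldr (· ∘ ·) id) f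

/-- The `𝔰`-scaled Taylor jet operator
`T_{α,x,y} f = ∑_{|ℓ|_𝔰 < α} (y−x)^ℓ/ℓ! (D^ℓ f)(x)`. -/
noncomputable def tjet {n : ℕ} (s : Fin n → ℕ) (α : ℝ) (x : Fin n → ℝ)
    (f : (Fin n → ℝ) → ℝ) : (Fin n → ℝ) → ℝ :=
  fun y => ∑ᶠ ℓ : Fin n → ℕ,
    if (∑ i, (s i * ℓ i : ℝ)) < α then
      (∏ i, (y i - x i) ^ ℓ i) / (∏ i, ((ℓ i).factorial : ℝ)) * mderiv ℓ f x
    else 0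

/-!
Write `F = T_{α,x,·} f` and `G = T_{β,x,·} g`. Pointwise, `F g + f G - f g = F G - (f - F)(g - G)`.
The jet `T_{α+β,x,·}` is linear on smooth functions, reproduces the polynomial `F G` (all of whose
monomials have scaled degree `< α + β`), and annihilates `(f - F)(g - G)`: `D^m (f - F)` vanishes at
`x` for `|m|_𝔰 < α` and `D^k (g - G)` for `|k|_𝔰 < β`, so by the Leibniz rule `D^ℓ` of the product
vanishes at `x` whenever `|ℓ|_𝔰 < α + β`, because `|m|_𝔰 + |ℓ - m|_𝔰 = |ℓ|_𝔰`.
-/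

section SmoothLinear

variable {n : ℕ}

def smoothFunctions (n : ℕ) : Submodule ℝ ((Fin n → ℝ) → ℝ) where
  carrier := {f | ContDiff ℝ (⊤ : ℕ∞) f}
  add_mem' {f g} (hf : ContDiff ℝ (⊤ : ℕ∞) f) (hg : ContDiff ℝ (⊤ : ℕ∞) g) := hf.add hg
  zero_mem' := (contDiff_const : ContDiff ℝ (⊤ : ℕ∞) fun _ : Fin n → ℝ => (0 : ℝ))
  smul_mem' _ f (hf : ContDiff ℝ (⊤ : ℕ∞) f) := contDiff_const.smul hf

theorem mem_smoothFunctions {f : (Fin n → ℝ) → ℝ} :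
    f ∈ smoothFunctions n ↔ ContDiff ℝ (⊤ : ℕ∞) f :=
  Iff.rfl

/-- `pderiv'` is additive only on differentiable functions (`fderiv` is `0` elsewhere), so
linearity of derivative operators is expressed on the submodule of smooth functions. -/
def IsLinearOnSmooth (T : ((Fin n → ℝ) → ℝ) → (Fin n → ℝ) → ℝ) : Prop :=
  ∃ L : Module.End ℝ (smoothFunctions n), ∀ f (hf : f ∈ smoothFunctions n), T f = L ⟨f, hf⟩

namespace IsLinearOnSmooth

variable {T T' : ((Fin n → ℝ) → ℝ) → (Fin n → ℝ) → ℝ} {f g : (Fin n → ℝ) → ℝ}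

theorem contDiff (hT : IsLinearOnSmooth T) (hf : ContDiff ℝ (⊤ : ℕ∞) f) :
    ContDiff ℝ (⊤ : ℕ∞) (T f) := by
  obtain ⟨L, hL⟩ := hT
  rw [← mem_smoothFunctions] at hf ⊢
  exact hL f hf ▸ (L ⟨f, hf⟩).2

theorem map_sub (hT : IsLinearOnSmooth T) (hf : ContDiff ℝ (⊤ : ℕ∞) f)
    (hg : ContDiff ℝ (⊤ : ℕ∞) g) : T (f - g) = T f - T g := by
  obtain ⟨L, hL⟩ := hT
  rw [← mem_smoothFunctions] at hf hg
  rw [hL _ (sub_mem hf hg), hL f hf, hL g hg]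
  exact congrArg Subtype.val (L.map_sub ⟨f, hf⟩ ⟨g, hg⟩)

theorem map_smul (hT : IsLinearOnSmooth T) (c : ℝ) (hf : ContDiff ℝ (⊤ : ℕ∞) f) :
    T (c • f) = c • T f := by
  obtain ⟨L, hL⟩ := hT
  rw [← mem_smoothFunctions] at hf
  rw [hL _ (Submodule.smul_mem _ c hf), hL f hf]
  exact congrArg Subtype.val (L.map_smul c ⟨f, hf⟩)

theorem map_nsmul (hT : IsLinearOnSmooth T) (c : ℕ) (hf : ContDiff ℝ (⊤ : ℕ∞) f) :
    T (c • f) = c • T f := by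
  simpa only [Nat.cast_smul_eq_nsmul] using hT.map_smul (c : ℝ) hf

theorem map_add (hT : IsLinearOnSmooth T) (hf : ContDiff ℝ (⊤ : ℕ∞) f)
    (hg : ContDiff ℝ (⊤ : ℕ∞) g) : T (f + g) = T f + T g := by
  obtain ⟨L, hL⟩ := hT
  rw [← mem_smoothFunctions] at hf hg
  rw [hL _ (add_mem hf hg), hL f hf, hL g hg]
  exact congrArg Subtype.val (L.map_add ⟨f, hf⟩ ⟨g, hg⟩)

theorem map_sum (hT : IsLinearOnSmooth T) {ι : Type*} (S : Finset ι)
    {F : ι → (Fin n → ℝ) → ℝ} (hF : ∀ p ∈ S, ContDiff ℝ (⊤ : ℕ∞) (F p)) :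
    T (∑ p ∈ S, F p) = ∑ p ∈ S, T (F p) := by
  classical
  induction S using Finset.induction_on with
  | empty => simpa using hT.map_smul 0 contDiff_zero_fun
  | insert a S ha ih =>
    have hS : ∀ p ∈ S, ContDiff ℝ (⊤ : ℕ∞) (F p) := fun p hp => hF p (Finset.mem_insert_of_mem hp)
    rw [Finset.sum_insert ha, Finset.sum_insert ha,
      hT.map_add (hF a (Finset.mem_insert_self a S))
        (mem_smoothFunctions.mp (Submodule.sum_mem _ hS)), ih hS]

theorem comp (hT : IsLinearOnSmooth T) (hT' : IsLinearOnSmooth T') :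
    IsLinearOnSmooth (T ∘ T') := by
  obtain ⟨L, hL⟩ := hT
  obtain ⟨L', hL'⟩ := hT'
  exact ⟨L * L', fun f hf => by rw [Function.comp_apply, hL' f hf, hL _ (L' ⟨f, hf⟩).2]; rfl⟩

theorem id : IsLinearOnSmooth (id : ((Fin n → ℝ) → ℝ) → (Fin n → ℝ) → ℝ) :=
  ⟨1, fun _ _ => rfl⟩

theorem iterate (hT : IsLinearOnSmooth T) (k : ℕ) : IsLinearOnSmooth T^[k] := by
  induction k with
  | zero => exact IsLinearOnSmooth.id
  | succ k ih => rw [Function.iterate_succ]; exact ih.comp hT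

end IsLinearOnSmooth

theorem pderiv'_add (i : Fin n) {f g : (Fin n → ℝ) → ℝ} (hf : Differentiable ℝ f)
    (hg : Differentiable ℝ g) : pderiv' i (f + g) = pderiv' i f + pderiv' i g := by
  funext y
  simp [pderiv', fderiv_add (hf y) (hg y)]

theorem pderiv'_smul (i : Fin n) (c : ℝ) {f : (Fin n → ℝ) → ℝ} (hf : Differentiable ℝ f) :
    pderiv' i (c • f) = c • pderiv' i f := by
  funext y
  simp [pderiv', fderiv_const_smul (hf y)]

theorem pderiv'_mul (i : Fin n) {f g : (Fin n → ℝ) → ℝ} (hf : Differentiable ℝ f)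
    (hg : Differentiable ℝ g) : pderiv' i (f * g) = pderiv' i f * g + f * pderiv' i g := by
  funext y
  simp only [pderiv', fderiv_mul (hf y) (hg y), add_apply,
    smul_apply, smul_eq_mul, Pi.add_apply, Pi.mul_apply]
  ring

theorem ContDiff.pderiv' (i : Fin n) {f : (Fin n → ℝ) → ℝ} (hf : ContDiff ℝ (⊤ : ℕ∞) f) :
    ContDiff ℝ (⊤ : ℕ∞) (pderiv' i f) :=
  (hf.fderiv_right le_rfl).clm_apply contDiff_const

theorem isLinearOnSmooth_pderiv' (i : Fin n) : IsLinearOnSmooth (pderiv' (n := n) i) := by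
  have hdiff {f : (Fin n → ℝ) → ℝ} (hf : f ∈ smoothFunctions n) : Differentiable ℝ f :=
    (mem_smoothFunctions.1 hf).differentiable (by simp)
  exact ⟨{ toFun f := ⟨pderiv' i f, (mem_smoothFunctions.1 f.2).pderiv' i⟩
           map_add' f g := Subtype.ext (pderiv'_add i (hdiff f.2) (hdiff g.2))
           map_smul' c f := Subtype.ext (pderiv'_smul i c (hdiff f.2)) }, fun _ _ => rfl⟩

end SmoothLinear

section MixedDerivatives

variable {n : ℕ}

open Function

noncomputable def mderivList (l : List (Fin n)) (ℓ : Fin n → ℕ) :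
    ((Fin n → ℝ) → ℝ) → (Fin n → ℝ) → ℝ :=
  (l.map fun i => (pderiv' i)^[ℓ i]).foldr (· ∘ ·) id

theorem mderivList_cons (i : Fin n) (l : List (Fin n)) (ℓ : Fin n → ℕ) :
    mderivList (i :: l) ℓ = (pderiv' i)^[ℓ i] ∘ mderivList l ℓ :=
  rfl

theorem mderiv_eq_mderivList (ℓ : Fin n → ℕ) : mderiv ℓ = mderivList (List.finRange n) ℓ :=
  rfl

theorem isLinearOnSmooth_mderivList (l : List (Fin n)) (ℓ : Fin n → ℕ) :
    IsLinearOnSmooth (mderivList l ℓ) := by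
  induction l with
  | nil => exact IsLinearOnSmooth.id
  | cons i l ih => exact ((isLinearOnSmooth_pderiv' i).iterate (ℓ i)).comp ih

theorem isLinearOnSmooth_mderiv (ℓ : Fin n → ℕ) : IsLinearOnSmooth (mderiv (n := n) ℓ) :=
  isLinearOnSmooth_mderivList _ ℓ

theorem mderivList_congr (l : List (Fin n)) {ℓ ℓ' : Fin n → ℕ} (h : ∀ i ∈ l, ℓ i = ℓ' i) :
    mderivList l ℓ = mderivList l ℓ' := by
  unfold mderivList
  rw [List.map_congr_left fun i hi => by rw [h i hi]]

theorem mderivList_cons_update {i : Fin n} {l : List (Fin n)} (hi : i ∉ l) (m : Fin n → ℕ)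
    (k : ℕ) : mderivList (i :: l) (update m i k) = (pderiv' i)^[k] ∘ mderivList l m := by
  rw [mderivList_cons, update_self,
    mderivList_congr l fun j hj => update_of_ne (ne_of_mem_of_not_mem hj hi) k m]

theorem iterate_pderiv'_mul (i : Fin n) (k : ℕ) {f g : (Fin n → ℝ) → ℝ}
    (hf : ContDiff ℝ (⊤ : ℕ∞) f) (hg : ContDiff ℝ (⊤ : ℕ∞) g) :
    (pderiv' i)^[k] (f * g)
      = ∑ j ∈ Finset.range (k + 1),
          k.choose j • ((pderiv' i)^[j] f * (pderiv' i)^[k - j] g) := by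
  induction k generalizing f g with
  | zero => simp
  | succ k ih =>
    have hD := isLinearOnSmooth_pderiv' i
    rw [iterate_succ_apply,
      pderiv'_mul i (hf.differentiable (by simp)) (hg.differentiable (by simp)),
      (hD.iterate k).map_add (f := pderiv' i f * g) (g := f * pderiv' i g)
        ((hD.contDiff hf).mul hg) (hf.mul (hD.contDiff hg)),
      ih (hD.contDiff hf) hg, ih hf (hD.contDiff hg),
      Finset.sum_choose_succ_nsmul (fun a b => (pderiv' i)^[a] f * (pderiv' i)^[b] g), add_comm]
    congr 1
    refine Finset.sum_congr rfl fun j hj => ?_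
    rw [← iterate_succ_apply, Nat.succ_eq_add_one,
      Nat.sub_add_comm (Nat.lt_succ_iff.mp (Finset.mem_range.mp hj))]

theorem Finset.sum_Iic_eq_sum_Iic_update {M : Type*} [AddCommMonoid M] (ν : Fin n → ℕ)
    (i : Fin n) (F : (Fin n → ℕ) → M) :
    ∑ m ∈ Finset.Iic ν, F m
      = ∑ m ∈ Finset.Iic (update ν i 0), ∑ j ∈ Finset.range (ν i + 1), F (update m i j) := by
  rw [← Finset.sum_product']
  symm
  refine Finset.sum_nbij' (fun p => update p.1 i p.2) (fun m => (update m i 0, m i)) ?_ ?_ ?_ ?_ ?_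
  · rintro ⟨m, j⟩ hp
    simp only [Finset.mem_product, Finset.mem_Iic, Finset.mem_range] at hp ⊢
    intro k
    rcases eq_or_ne k i with rfl | hk
    · simpa using Nat.lt_succ_iff.mp hp.2
    · simpa [hk] using hp.1 k
  · intro m hm
    simp only [Finset.mem_product, Finset.mem_Iic, Finset.mem_range] at hm ⊢
    refine ⟨fun k => ?_, Nat.lt_succ_of_le (hm i)⟩
    rcases eq_or_ne k i with rfl | hk
    · simp
    · simpa [hk] using hm k
  · rintro ⟨m, j⟩ hp
    simp only [Finset.mem_product, Finset.mem_Iic] at hp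
    have hmi : m i = 0 := by simpa using hp.1 i
    simp [← hmi]
  · intro m _
    simp
  · exact fun _ _ => rfl

theorem prod_choose_update {ℓ m : Fin n → ℕ} {i : Fin n} (hm : m i = 0) (k : ℕ) :
    ∏ j, (ℓ j).choose (update m i k j)
      = (∏ j, (update ℓ i 0 j).choose (m j)) * (ℓ i).choose k := by
  rw [Fintype.prod_eq_mul_prod_compl i, Fintype.prod_eq_mul_prod_compl i]
  simp only [update_self, hm, Nat.choose_self, one_mul, mul_comm]
  congr 1
  exact Finset.prod_congr rfl fun j hj => by
    rw [update_of_ne (by simpa using hj), update_of_ne (by simpa using hj)]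

theorem mderivList_mul (l : List (Fin n)) (hl : l.Nodup) {ℓ : Fin n → ℕ}
    (hℓ : ∀ j ∉ l, ℓ j = 0) {f g : (Fin n → ℝ) → ℝ}
    (hf : ContDiff ℝ (⊤ : ℕ∞) f) (hg : ContDiff ℝ (⊤ : ℕ∞) g) :
    mderivList l ℓ (f * g)
      = ∑ m ∈ Finset.Iic ℓ,
          (∏ j, (ℓ j).choose (m j)) • (mderivList l m f * mderivList l (ℓ - m) g) := by
  induction l generalizing ℓ with
  | nil =>
    obtain rfl : ℓ = 0 := funext fun j => hℓ j List.not_mem_nil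
    rw [show Finset.Iic (0 : Fin n → ℕ) = {0} from Finset.Iic_bot]
    simp [mderivList]
  | cons i l ih =>
    obtain ⟨hil, hl⟩ := List.nodup_cons.mp hl
    have hD := isLinearOnSmooth_pderiv' i
    have hM := isLinearOnSmooth_mderivList (n := n) l
    set ℓ' := update ℓ i 0
    have hℓ' : ∀ j ∉ l, ℓ' j = 0 := fun j hj => by
      rcases eq_or_ne j i with rfl | hji
      · simp [ℓ']
      · simpa [ℓ', hji] using hℓ j (by simp [hji, hj])
    have hsmooth : ∀ m : Fin n → ℕ,
        ContDiff ℝ (⊤ : ℕ∞) (mderivList l m f * mderivList l (ℓ' - m) g) := fun m =>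
      (hM m |>.contDiff hf).mul (hM _ |>.contDiff hg)
    calc mderivList (i :: l) ℓ (f * g) = (pderiv' i)^[ℓ i] (mderivList l ℓ' (f * g)) := by
          rw [mderivList_cons, comp_apply,
            mderivList_congr l fun j hj => (update_of_ne (ne_of_mem_of_not_mem hj hil) _ _).symm]
      _ = ∑ m ∈ Finset.Iic ℓ', ∑ j ∈ Finset.range (ℓ i + 1),
            ((∏ j, (ℓ' j).choose (m j)) * (ℓ i).choose j) • ((pderiv' i)^[j] (mderivList l m f)
              * (pderiv' i)^[ℓ i - j] (mderivList l (ℓ' - m) g)) := by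
          rw [ih hl hℓ', (hD.iterate _).map_sum _ fun m _ => ?smooth]
          case smooth => exact (hsmooth m).const_smul (∏ j, (ℓ' j).choose (m j))
          refine Finset.sum_congr rfl fun m _ => ?_
          rw [(hD.iterate _).map_nsmul _ (hsmooth m),
            iterate_pderiv'_mul i _ (hM m |>.contDiff hf) (hM _ |>.contDiff hg), Finset.smul_sum]
          simp only [smul_smul]
      _ = _ := by
          rw [Finset.sum_Iic_eq_sum_Iic_update ℓ i]
          refine Finset.sum_congr rfl fun m hm => Finset.sum_congr rfl fun j _ => ?_
          have hmi : m i = 0 := by simpa [ℓ'] using Finset.mem_Iic.mp hm i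
          have hsub : ℓ - update m i j = update (ℓ' - m) i (ℓ i - j) := by
            funext k
            rcases eq_or_ne k i with rfl | hki
            · simp
            · simp [ℓ', hki]
          rw [prod_choose_update hmi, hsub, mderivList_cons_update hil,
            mderivList_cons_update hil, comp_apply, comp_apply]

end MixedDerivatives

section Monomials

variable {n : ℕ}

open Function

noncomputable def monomialAt (x : Fin n → ℝ) (m : Fin n → ℕ) : (Fin n → ℝ) → ℝ :=
  fun y => ∏ i, (y i - x i) ^ m i

theorem monomialAt_add (x : Fin n → ℝ) (m k : Fin n → ℕ) :
    monomialAt x (m + k) = monomialAt x m * monomialAt x k := by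
  funext y
  simp [monomialAt, pow_add, Finset.prod_mul_distrib]

theorem contDiff_monomialAt (x : Fin n → ℝ) (m : Fin n → ℕ) :
    ContDiff ℝ (⊤ : ℕ∞) (monomialAt x m) :=
  contDiff_prod fun j _ => ((contDiff_apply ℝ ℝ j).sub contDiff_const).pow (m j)

theorem pderiv'_monomialAt (i : Fin n) (x : Fin n → ℝ) (m : Fin n → ℕ) :
    pderiv' i (monomialAt x m) = (m i : ℝ) • monomialAt x (update m i (m i - 1)) := by
  funext y
  have hfactor : ∀ j, HasFDerivAt (fun y : Fin n → ℝ => (y j - x j) ^ m j)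
      ((m j * (y j - x j) ^ (m j - 1)) • ContinuousLinearMap.proj j) y := fun j => by
    simpa using ((hasFDerivAt_apply (𝕜 := ℝ) j y).sub_const (x j)).pow (m j)
  rw [pderiv', show monomialAt x m = fun y => ∏ j, (y j - x j) ^ m j from rfl,
    (HasFDerivAt.finsetProd fun j _ => hfactor j).fderiv]
  simp only [sum_apply, smul_apply,
    ContinuousLinearMap.proj_apply, Pi.single_apply, smul_eq_mul, mul_ite, mul_one, mul_zero,
    Finset.sum_ite_eq', Finset.mem_univ, if_true, Pi.smul_apply, monomialAt,
    apply_update (fun j e => (y j - x j) ^ e), Finset.prod_update_of_mem,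
    Finset.sdiff_singleton_eq_erase]
  ring

theorem iterate_pderiv'_monomialAt (i : Fin n) (k : ℕ) (x : Fin n → ℝ) (m : Fin n → ℕ) :
    (pderiv' i)^[k] (monomialAt x m)
      = ((m i).descFactorial k : ℝ) • monomialAt x (update m i (m i - k)) := by
  induction k with
  | zero => simp
  | succ k ih =>
    rw [iterate_succ_apply', ih, (isLinearOnSmooth_pderiv' i).map_smul _ (contDiff_monomialAt x _),
      pderiv'_monomialAt, smul_smul, update_self, update_idem, Nat.sub_sub,
      Nat.descFactorial_succ, Nat.cast_mul, mul_comm]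

theorem mderivList_monomialAt (l : List (Fin n)) (hl : l.Nodup) (k : Fin n → ℕ)
    (x : Fin n → ℝ) (m : Fin n → ℕ) :
    mderivList l k (monomialAt x m)
      = (∏ i ∈ l.toFinset, ((m i).descFactorial (k i) : ℝ))
          • monomialAt x (fun j => if j ∈ l then m j - k j else m j) := by
  induction l with
  | nil => simp [mderivList]
  | cons i l ih =>
    obtain ⟨hil, hl⟩ := List.nodup_cons.mp hl
    have hupdate : update (fun j => if j ∈ l then m j - k j else m j) i (m i - k i)
        = fun j => if j ∈ i :: l then m j - k j else m j := by
      funext j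
      rcases eq_or_ne j i with rfl | hji
      · simp
      · simp [hji]
    rw [mderivList_cons, comp_apply, ih hl, (isLinearOnSmooth_pderiv' i).iterate _ |>.map_smul _
        (contDiff_monomialAt x _), iterate_pderiv'_monomialAt, if_neg hil, hupdate, smul_smul,
      List.toFinset_cons, Finset.prod_insert (by simpa using hil), mul_comm]

theorem mderiv_monomialAt_apply_self (k : Fin n → ℕ) (x : Fin n → ℝ) (m : Fin n → ℕ) :
    mderiv k (monomialAt x m) x = if k = m then ∏ i, ((m i).factorial : ℝ) else 0 := by
  rw [mderiv_eq_mderivList, mderivList_monomialAt _ (List.nodup_finRange n)]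
  simp only [List.mem_finRange, if_true, List.toFinset_finRange, Pi.smul_apply, smul_eq_mul,
    monomialAt, sub_self]
  split_ifs with hkm
  · simp [hkm, Nat.descFactorial_self]
  · obtain ⟨j, hj⟩ := Function.ne_iff.mp hkm
    rcases lt_or_gt_of_ne hj with hlt | hgt
    · exact mul_eq_zero_of_right _
        (Finset.prod_eq_zero (Finset.mem_univ j) (zero_pow (Nat.sub_ne_zero_of_lt hlt)))
    · exact mul_eq_zero_of_left (Finset.prod_eq_zero (Finset.mem_univ j)
        (by exact_mod_cast Nat.descFactorial_eq_zero_iff_lt.mpr hgt)) _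

end Monomials

section Jets

variable {n : ℕ} {s : Fin n → ℕ}

def scaledDegree (s ℓ : Fin n → ℕ) : ℝ :=
  ∑ i, (s i * ℓ i : ℝ)

theorem scaledDegree_add (s ℓ m : Fin n → ℕ) :
    scaledDegree s (ℓ + m) = scaledDegree s ℓ + scaledDegree s m := by
  simp [scaledDegree, mul_add, Finset.sum_add_distrib]

theorem le_ceil_of_scaledDegree_lt (hs : ∀ i, 0 < s i) {γ : ℝ}
    {ℓ : Fin n → ℕ} (h : scaledDegree s ℓ < γ) : ℓ ≤ fun _ => ⌈γ⌉₊ := by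
  intro i
  refine (Nat.lt_ceil.mpr (lt_of_le_of_lt ?_ h)).le
  calc (ℓ i : ℝ) ≤ s i * ℓ i := le_mul_of_one_le_left (Nat.cast_nonneg _) (by exact_mod_cast hs i)
    _ ≤ scaledDegree s ℓ :=
      Finset.single_le_sum (f := fun j => (s j * ℓ j : ℝ)) (fun j _ => by positivity)
        (Finset.mem_univ i)

noncomputable def multiIndicesBelow (s : Fin n → ℕ) (γ : ℝ) : Finset (Fin n → ℕ) :=
  {ℓ ∈ Finset.Iic fun _ => ⌈γ⌉₊ | scaledDegree s ℓ < γ}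

theorem mem_multiIndicesBelow (hs : ∀ i, 0 < s i) {γ : ℝ} {ℓ : Fin n → ℕ} :
    ℓ ∈ multiIndicesBelow s γ ↔ scaledDegree s ℓ < γ := by
  simpa [multiIndicesBelow] using le_ceil_of_scaledDegree_lt hs

theorem tjet_apply (s : Fin n → ℕ) (γ : ℝ) (x : Fin n → ℝ) (f : (Fin n → ℝ) → ℝ)
    (y : Fin n → ℝ) :
    tjet s γ x f y = ∑ᶠ ℓ, if scaledDegree s ℓ < γ then
      monomialAt x ℓ y / (∏ i, ((ℓ i).factorial : ℝ)) * mderiv ℓ f x else 0 :=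
  rfl

noncomputable def taylorCoeff (f : (Fin n → ℝ) → ℝ) (x : Fin n → ℝ) (ℓ : Fin n → ℕ) : ℝ :=
  mderiv ℓ f x / ∏ i, ((ℓ i).factorial : ℝ)

theorem mderiv_sum_smul_monomialAt {ι : Type*} (S : Finset ι) (a : ι → ℝ)
    (e : ι → Fin n → ℕ) (x : Fin n → ℝ) (k : Fin n → ℕ) :
    mderiv k (∑ p ∈ S, a p • monomialAt x (e p)) x
      = (∑ p ∈ S with e p = k, a p) * ∏ i, ((k i).factorial : ℝ) := by
  have hD := isLinearOnSmooth_mderiv (n := n) k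
  rw [hD.map_sum _ fun p _ => ?smooth]
  case smooth => exact (contDiff_monomialAt x (e p)).const_smul (a p)
  simp only [Finset.sum_apply, hD.map_smul _ (contDiff_monomialAt x _), Pi.smul_apply,
    mderiv_monomialAt_apply_self, smul_eq_mul, mul_ite, mul_zero, Finset.sum_filter, Finset.sum_mul]
  refine Finset.sum_congr rfl fun p _ => ?_
  by_cases h : e p = k
  · simp [h]
  · simp [h, Ne.symm h]

theorem tjet_sum_smul_monomialAt (s : Fin n → ℕ) (γ : ℝ) {ι : Type*} (S : Finset ι)
    (a : ι → ℝ) (e : ι → Fin n → ℕ) (x : Fin n → ℝ) :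
    tjet s γ x (∑ p ∈ S, a p • monomialAt x (e p))
      = ∑ p ∈ S with scaledDegree s (e p) < γ, a p • monomialAt x (e p) := by
  classical
  funext y
  rw [tjet_apply, finsum_eq_sum_of_support_subset _ (s := S.image e) fun ℓ hℓ => ?support]
  case support =>
    by_contra hℓS
    refine hℓ ?_
    beta_reduce
    have hfiber : ∀ p ∈ S, e p ≠ ℓ := fun p hp hpℓ => hℓS (hpℓ ▸ Finset.mem_image_of_mem e hp)
    simp [mderiv_sum_smul_monomialAt, Finset.filter_false_of_mem hfiber]
  rw [Finset.sum_filter, Finset.sum_apply]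
  refine Finset.sum_image' _ fun p _ => ?_
  have hfact : ∏ i, ((e p i).factorial : ℝ) ≠ 0 := by positivity
  rw [mderiv_sum_smul_monomialAt, Finset.sum_mul, Finset.mul_sum]
  split_ifs with h
  · refine Finset.sum_congr rfl fun j hj => ?_
    rw [(Finset.mem_filter.mp hj).2, if_pos h, Pi.smul_apply, smul_eq_mul]
    field_simp
  · refine (Finset.sum_eq_zero fun j hj => ?_).symm
    rw [(Finset.mem_filter.mp hj).2, if_neg h, Pi.zero_apply]

theorem tjet_eq_sum (hs : ∀ i, 0 < s i) (γ : ℝ) (x : Fin n → ℝ) (f : (Fin n → ℝ) → ℝ) :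
    tjet s γ x f = ∑ ℓ ∈ multiIndicesBelow s γ, taylorCoeff f x ℓ • monomialAt x ℓ := by
  funext y
  rw [tjet_apply, finsum_eq_sum_of_support_subset _ (s := multiIndicesBelow s γ) fun ℓ hℓ => ?_]
  · rw [Finset.sum_apply]
    refine Finset.sum_congr rfl fun ℓ hℓ => ?_
    rw [if_pos ((mem_multiIndicesBelow hs).mp hℓ), Pi.smul_apply, smul_eq_mul, taylorCoeff]
    ring
  · by_contra hℓM
    exact hℓ (if_neg (mt (mem_multiIndicesBelow hs).mpr hℓM))

theorem tjet_contDiff (hs : ∀ i, 0 < s i) (γ : ℝ) (x : Fin n → ℝ) (f : (Fin n → ℝ) → ℝ) :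
    ContDiff ℝ (⊤ : ℕ∞) (tjet s γ x f) := by
  rw [tjet_eq_sum hs, ← mem_smoothFunctions]
  exact Submodule.sum_mem _ fun ℓ _ => Submodule.smul_mem _ _ (contDiff_monomialAt x ℓ)

theorem mderiv_tjet_of_lt (hs : ∀ i, 0 < s i) {γ : ℝ} (x : Fin n → ℝ) (f : (Fin n → ℝ) → ℝ)
    {m : Fin n → ℕ} (hm : scaledDegree s m < γ) : mderiv m (tjet s γ x f) x = mderiv m f x := by
  have hfact : ∏ i, ((m i).factorial : ℝ) ≠ 0 := by positivity
  rw [tjet_eq_sum hs, mderiv_sum_smul_monomialAt _ _ (fun ℓ => ℓ), Finset.sum_filter,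
    Finset.sum_ite_eq', if_pos ((mem_multiIndicesBelow hs).mpr hm), taylorCoeff,
    div_mul_cancel₀ _ hfact]

theorem mderiv_sub_tjet_of_lt (hs : ∀ i, 0 < s i) {γ : ℝ} (x : Fin n → ℝ)
    {f : (Fin n → ℝ) → ℝ} (hf : ContDiff ℝ (⊤ : ℕ∞) f) {m : Fin n → ℕ}
    (hm : scaledDegree s m < γ) : mderiv m (f - tjet s γ x f) x = 0 := by
  rw [(isLinearOnSmooth_mderiv m).map_sub hf (tjet_contDiff hs γ x f), Pi.sub_apply,
    mderiv_tjet_of_lt hs x f hm, sub_self]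

theorem tjet_sub (hs : ∀ i, 0 < s i) (γ : ℝ) (x : Fin n → ℝ) {u v : (Fin n → ℝ) → ℝ}
    (hu : ContDiff ℝ (⊤ : ℕ∞) u) (hv : ContDiff ℝ (⊤ : ℕ∞) v) :
    tjet s γ x (u - v) = tjet s γ x u - tjet s γ x v := by
  simp only [tjet_eq_sum hs, taylorCoeff, (isLinearOnSmooth_mderiv _).map_sub hu hv, Pi.sub_apply,
    sub_div, sub_smul, Finset.sum_sub_distrib]

theorem tjet_eq_zero_of_mderiv_eq_zero (γ : ℝ) (x : Fin n → ℝ) {u : (Fin n → ℝ) → ℝ}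
    (hu : ∀ ℓ, scaledDegree s ℓ < γ → mderiv ℓ u x = 0) : tjet s γ x u = 0 := by
  funext y
  rw [tjet_apply]
  refine finsum_eq_zero_of_forall_eq_zero fun ℓ => ?_
  split_ifs with hℓ
  · rw [hu ℓ hℓ, mul_zero]
  · rfl

theorem mderiv_mul_eq_zero (x : Fin n → ℝ) {α β : ℝ} {u v : (Fin n → ℝ) → ℝ}
    (hu : ContDiff ℝ (⊤ : ℕ∞) u) (hv : ContDiff ℝ (⊤ : ℕ∞) v)
    (hu₀ : ∀ m, scaledDegree s m < α → mderiv m u x = 0)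
    (hv₀ : ∀ k, scaledDegree s k < β → mderiv k v x = 0)
    {ℓ : Fin n → ℕ} (hℓ : scaledDegree s ℓ < α + β) : mderiv ℓ (u * v) x = 0 := by
  rw [mderiv_eq_mderivList, mderivList_mul _ (List.nodup_finRange n)
    (fun j hj => absurd (List.mem_finRange j) hj) hu hv, Finset.sum_apply]
  refine Finset.sum_eq_zero fun m hm => ?_
  have hsplit : scaledDegree s m + scaledDegree s (ℓ - m) = scaledDegree s ℓ := by
    rw [← scaledDegree_add, add_tsub_cancel_of_le (Finset.mem_Iic.mp hm)]
  rw [Pi.smul_apply, Pi.mul_apply, ← mderiv_eq_mderivList, ← mderiv_eq_mderivList]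
  rcases lt_or_ge (scaledDegree s m) α with hm | hm
  · rw [hu₀ m hm, zero_mul, smul_zero]
  · rw [hv₀ (ℓ - m) (by linarith), mul_zero, smul_zero]

theorem tjet_mul_tjet (hs : ∀ i, 0 < s i) (α β : ℝ) (x : Fin n → ℝ) (f g : (Fin n → ℝ) → ℝ) :
    tjet s α x f * tjet s β x g
      = ∑ p ∈ multiIndicesBelow s α ×ˢ multiIndicesBelow s β,
          (taylorCoeff f x p.1 * taylorCoeff g x p.2) • monomialAt x (p.1 + p.2) := by
  rw [tjet_eq_sum hs, tjet_eq_sum hs, Finset.sum_mul_sum, ← Finset.sum_product']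
  simp only [smul_mul_smul_comm, monomialAt_add]

theorem tjet_tjet_mul_tjet (hs : ∀ i, 0 < s i) (α β : ℝ) (x : Fin n → ℝ)
    (f g : (Fin n → ℝ) → ℝ) :
    tjet s (α + β) x (tjet s α x f * tjet s β x g) = tjet s α x f * tjet s β x g := by
  rw [tjet_mul_tjet hs, tjet_sum_smul_monomialAt, Finset.filter_true_of_mem fun p hp => ?_]
  obtain ⟨hα, hβ⟩ := Finset.mem_product.mp hp
  rw [scaledDegree_add]
  exact add_lt_add ((mem_multiIndicesBelow hs).mp hα) ((mem_multiIndicesBelow hs).mp hβ)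

end Jets

theorem tjet_rotaBaxter_family_general {d : ℕ} (s : Fin (d + 1) → ℕ) (hs : ∀ i, 0 < s i)
    (α β : ℝ) (x : Fin (d + 1) → ℝ)
    (f g : (Fin (d + 1) → ℝ) → ℝ)
    (hf : ContDiff ℝ (⊤ : ℕ∞) f) (hg : ContDiff ℝ (⊤ : ℕ∞) g) :
    ∀ y, tjet s α x f y * tjet s β x g y
      = tjet s (α + β) x
          (fun z => tjet s α x f z * g z + f z * tjet s β x g z - f z * g z) y := by
  set F := tjet s α x f
  set G := tjet s β x g
  have hF : ContDiff ℝ (⊤ : ℕ∞) F := tjet_contDiff hs α x f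
  have hG : ContDiff ℝ (⊤ : ℕ∞) G := tjet_contDiff hs β x g
  have hbracket : (fun z => F z * g z + f z * G z - f z * g z) = F * G - (f - F) * (g - G) := by
    funext z
    simp only [Pi.sub_apply, Pi.mul_apply]
    ring
  have hremainder : tjet s (α + β) x ((f - F) * (g - G)) = 0 :=
    tjet_eq_zero_of_mderiv_eq_zero _ x fun ℓ hℓ =>
      mderiv_mul_eq_zero x (hf.sub hF) (hg.sub hG) (fun _ => mderiv_sub_tjet_of_lt hs x hf)
        (fun _ => mderiv_sub_tjet_of_lt hs x hg) hℓ
  have hpolynomial : tjet s (α + β) x (F * G) = F * G := tjet_tjet_mul_tjet hs α β x f g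
  intro y
  rw [hbracket, tjet_sub hs _ x (u := F * G) (v := (f - F) * (g - G)) (hF.mul hG)
    ((hf.sub hF).mul (hg.sub hG)), hremainder, sub_zero, hpolynomial, Pi.mul_apply]

/-- the Taylor jet operators form a Rota–Baxter family:
`(T_{α,x,·}f)(T_{β,x,·}g) = T_{α+β,x,·}[(T_{α,x,·}f)g + f(T_{β,x,·}g) − fg]`. -/
theorem tjet_rotaBaxter_family {d : ℕ} (s : Fin (d + 1) → ℕ) (hs : ∀ i, 0 < s i)
    (α β : ℝ) (hα : 0 ≤ α) (hβ : 0 ≤ β) (x : Fin (d + 1) → ℝ)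
    (f g : (Fin (d + 1) → ℝ) → ℝ)
    (hf : ContDiff ℝ (⊤ : ℕ∞) f) (hg : ContDiff ℝ (⊤ : ℕ∞) g) :
    ∀ y, tjet s α x f y * tjet s β x g y
      = tjet s (α + β) x
          (fun z => tjet s α x f z * g z + f z * tjet s β x g z - f z * g z) y :=
  tjet_rotaBaxter_family_general s hs α β x f g hf hg
end

section
/- (Algebraic Birkhoff factorisation, Connes–Kreimer) Let H be a connected graded Hopf algebra over ℂ, A a commutative unital algebra with a linear Rota–Baxter projection Q of weight −1 splitting A = Q(A) ⊕ (id−Q)(A). For every character φ ∈ char(H,A), the maps defined by the Bogoliubov recursions φ₋ = 1* − Q((φ − 1*) ⋆ φ₋) and φ₊ = 1* + (id−Q)((φ − 1*) ⋆ φ₋) are well-defined algebra morphisms with values in Q(A) resp. (id−Q)(A) (on the augmentation ideal), and they satisfy the factorisation φ = φ₊ ⋆ φ₋^{−1}. -/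
/-!
Since `Δ` respects the grading and `ℬ 0 = ℂ 1`, the degree-`n` part of `(φ − 1*) ⋆ ψ` only
involves `ψ` in degrees `< n`; hence the Bogoliubov recursion has a unique solution `φ₋`,
built degree by degree. On the augmentation ideal `φ₋ = −Q ρ` with `ρ = (φ − 1*) ⋆ φ₋`, and by
induction on the degree the multiplicativity of `φ` gives
`ρ (x y) = ρ x ρ y + ρ x φ₋ y + φ₋ x ρ y`; the Rota–Baxter identity of weight `−1` turns
`−Q` of this into `φ₋ x φ₋ y`. Finally `φ₊ = 1* + ρ − Q ρ = φ ⋆ φ₋` is a convolution of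
characters, and `φ₊ ⋆ (φ₋ ∘ S) = φ ⋆ (φ₋ ⋆ (φ₋ ∘ S)) = φ`.
-/

open scoped TensorProduct

variable (H : Type) [Ring H] [HopfAlgebra ℂ H]
variable (A : Type) [CommRing A] [Algebra ℂ A]

/-- The convolution product `ψ ⋆ φ = m_A ∘ (ψ ⊗ φ) ∘ Δ`. -/
noncomputable def conv (f g : H →ₗ[ℂ] A) : H →ₗ[ℂ] A :=
  (LinearMap.mul' ℂ A) ∘ₗ (TensorProduct.map f g) ∘ₗ Coalgebra.comul (R := ℂ)

/-- The convolution unit `1* = η_A ∘ ε`. -/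
noncomputable def counitA : H →ₗ[ℂ] A :=
  (Algebra.linearMap ℂ A) ∘ₗ Coalgebra.counit (R := ℂ)

section GradedFixedPoint

variable {R M N : Type*} [CommSemiring R] [AddCommMonoid M] [Module R M] [AddCommMonoid N]
  [Module R N] (ℬ : ℕ → Submodule R M) [DirectSum.Decomposition ℬ]

def IsGradedContraction (T : (M →ₗ[R] N) → M →ₗ[R] N) : Prop :=
  ∀ n ψ ψ', (∀ j < n, ∀ z ∈ ℬ j, ψ z = ψ' z) → ∀ x ∈ ℬ n, T ψ x = T ψ' x

variable {ℬ} {T : (M →ₗ[R] N) → M →ₗ[R] N}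

theorem IsGradedContraction.eq_of_isFixedPt (hT : IsGradedContraction ℬ T) {ψ ψ' : M →ₗ[R] N}
    (hψ : Function.IsFixedPt T ψ) (hψ' : Function.IsFixedPt T ψ') : ψ = ψ' := by
  have agree : ∀ n, ∀ x ∈ ℬ n, ψ x = ψ' x := by
    intro n
    induction n using Nat.strong_induction_on with
    | _ n ih =>
      intro x hx
      rw [← hψ, ← hψ']
      exact hT n ψ ψ' ih x hx
  exact DirectSum.decompose_lhom_ext ℬ fun n => LinearMap.ext fun x => agree n x x.2

theorem IsGradedContraction.exists_isFixedPt (hT : IsGradedContraction ℬ T) :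
    ∃ ψ, Function.IsFixedPt T ψ := by
  -- the iterates `T^[k] 0` stabilise degreewise, and `ψ` glues their stable values
  set a : ℕ → M →ₗ[R] N := fun k => T^[k] 0
  have a_succ : ∀ k, a (k + 1) = T (a k) := fun k => Function.iterate_succ_apply' T k 0
  have stable : ∀ k, ∀ j < k, ∀ z ∈ ℬ j, a (k + 1) z = a k z := by
    intro k
    induction k with
    | zero => intro j hj; omega
    | succ k ih =>
      intro j hj z hz
      have := hT j _ _ (fun i hi => ih i (by omega)) z hz
      rwa [← a_succ, ← a_succ] at this
  have eventually : ∀ j, ∀ z ∈ ℬ j, ∀ m, j < m → a m z = a (j + 1) z := by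
    intro j z hz m hm
    induction m, hm using Nat.le_induction with
    | base => rfl
    | succ m hm ih => rw [stable m j hm z hz, ih]
  let ψ : M →ₗ[R] N := DirectSum.toModule R ℕ N (fun j => a (j + 1) ∘ₗ (ℬ j).subtype) ∘ₗ
    (DirectSum.decomposeLinearEquiv ℬ).toLinearMap
  have ψ_of_mem : ∀ j, ∀ z ∈ ℬ j, ψ z = a (j + 1) z := by
    intro j z hz
    simp [ψ, DirectSum.decomposeLinearEquiv_apply_coe ℬ j ⟨z, hz⟩]
  refine ⟨ψ, DirectSum.decompose_lhom_ext ℬ fun n => LinearMap.ext fun x => ?_⟩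
  calc T ψ x = T (a n) x := hT n ψ (a n)
        (fun j hj z hz => by rw [ψ_of_mem j z hz, eventually j z hz n hj]) x x.2
    _ = ψ x := by rw [← a_succ, ψ_of_mem n x x.2]

theorem IsGradedContraction.existsUnique_isFixedPt (hT : IsGradedContraction ℬ T) :
    ∃! ψ, Function.IsFixedPt T ψ :=
  let ⟨ψ, hψ⟩ := hT.exists_isFixedPt
  ⟨ψ, hψ, fun _ hψ' => hT.eq_of_isFixedPt hψ' hψ⟩

end GradedFixedPoint

section TensorGrade

variable {R C : Type*} [CommSemiring R] [AddCommMonoid C] [Module R C] (ℬ : ℕ → Submodule R C)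

def tensorGrade (n : ℕ) : Submodule R (C ⊗[R] C) :=
  ⨆ (p : ℕ × ℕ) (_ : p.1 + p.2 = n),
    LinearMap.range (TensorProduct.map (ℬ p.1).subtype (ℬ p.2).subtype)

variable {ℬ} in
@[elab_as_elim]
theorem tensorGrade_induction {n : ℕ} {motive : C ⊗[R] C → Prop} (zero : motive 0)
    (add : ∀ t s, motive t → motive s → motive (t + s))
    (tmul : ∀ p q, p + q = n → ∀ u ∈ ℬ p, ∀ v ∈ ℬ q, motive (u ⊗ₜ v))
    {t : C ⊗[R] C} (ht : t ∈ tensorGrade ℬ n) : motive t := by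
  refine Submodule.iSup_induction _ (motive := motive) ht (fun p t ht => ?_) zero add
  by_cases hp : p.1 + p.2 = n
  · rw [iSup_pos hp] at ht
    obtain ⟨s, rfl⟩ := ht
    induction s using TensorProduct.induction_on with
    | zero => simpa using zero
    | tmul u v => exact tmul p.1 p.2 hp u u.2 v v.2
    | add s s' hs hs' => simpa using add _ _ hs hs'
  · rw [iSup_neg hp, Submodule.mem_bot] at ht
    exact ht ▸ zero

end TensorGrade

section ConnectedGraded

variable {R C : Type*} [CommRing R] [Ring C] [Bialgebra R C]
  (ℬ : ℕ → Submodule R C) [GradedAlgebra ℬ]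

open Coalgebra in
theorem counit_eq_zero_of_mem (hconn : ℬ 0 = 1)
    (hcomul : ∀ n, ∀ x ∈ ℬ n, comul (R := R) x ∈ tensorGrade ℬ n)
    {n : ℕ} (hn : n ≠ 0) {x : C} (hx : x ∈ ℬ n) : counit (R := R) x = 0 := by
  induction n using Nat.strong_induction_on generalizing x with
  | _ n ih =>
  have scalar_of_mem_zero : ∀ u ∈ ℬ 0, u = algebraMap R C (counit (R := R) u) := by
    intro u hu
    rw [hconn] at hu
    obtain ⟨a, rfl⟩ := Submodule.mem_one.mp hu
    simp
  set π := GradedAlgebra.proj ℬ 0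
  have π_of_ne_zero : ∀ {m}, m ≠ 0 → ∀ u ∈ ℬ m, π u = 0 := fun hm u hu => by
    simp [π, DirectSum.decompose_of_mem_ne ℬ hu hm]
  have π_of_zero : ∀ u ∈ ℬ 0, π u = u := fun u hu => by
    simp [π, DirectSum.decompose_of_mem_same ℬ hu]
  -- on degree-`n` tensors, `ε ⊗ ε` is the sum of the degree-0 parts of `id ⊗ ε` and `ε ⊗ id`;
  -- at `t = Δ x` both of these are `π x = 0`
  have key : ∀ t ∈ tensorGrade ℬ n,
      algebraMap R C (counit (TensorProduct.rid R C (counit.lTensor C t))) =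
        π (TensorProduct.rid R C (counit.lTensor C t)) +
          π (TensorProduct.lid R C (counit.rTensor C t)) := by
    intro t ht
    refine tensorGrade_induction (by simp) (fun t s ht hs => ?_)
      (fun p q hpq u hu v hv => ?_) ht
    · simp only [map_add, ht, hs]; abel
    · simp only [LinearMap.lTensor_tmul,
        LinearMap.rTensor_tmul, TensorProduct.rid_tmul, TensorProduct.lid_tmul, map_smul]
      rcases Nat.eq_zero_or_pos p with rfl | hp
      · rw [π_of_zero u hu, π_of_ne_zero (by omega) v (by simpa [← hpq] using hv)]
        conv_rhs => rw [scalar_of_mem_zero u hu]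
        simp [Algebra.smul_def]
      rcases Nat.eq_zero_or_pos q with rfl | hq
      · rw [π_of_zero v hv, π_of_ne_zero (by omega) u (by simpa [← hpq] using hu)]
        conv_rhs => rw [scalar_of_mem_zero v hv]
        simpa [Algebra.smul_def] using Algebra.commutes _ _
      rw [ih p (by omega) (by omega) hu]
      simp [π_of_ne_zero (by omega) u hu]
  have := key _ (hcomul n x hx)
  rw [Coalgebra.lTensor_counit_comul, Coalgebra.rTensor_counit_comul] at this
  simpa [π_of_ne_zero hn x hx] using congr(counit (R := R) $this)

end ConnectedGraded

theorem map_mul_of_map_mul_of_mem_grade {R C D ι : Type*} [DecidableEq ι] [CommSemiring R]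
    [Semiring C] [Module R C] [Semiring D] [Module R D] (ℬ : ι → Submodule R C) [DirectSum.Decomposition ℬ]
    (f : C →ₗ[R] D) (h : ∀ i j, ∀ x ∈ ℬ i, ∀ y ∈ ℬ j, f (x * y) = f x * f y) (x y : C) :
    f (x * y) = f x * f y := by
  induction x using DirectSum.Decomposition.inductionOn ℬ with
  | zero => simp
  | add x x' hx hx' => simp [add_mul, hx, hx']
  | homogeneous x =>
    induction y using DirectSum.Decomposition.inductionOn ℬ with
    | zero => simp
    | add y y' hy hy' => simp [mul_add, hy, hy']
    | homogeneous y => exact h _ _ _ x.2 _ y.2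

variable {H A}

open WithConv

section Convolution

theorem toConv_conv (f g : H →ₗ[ℂ] A) : toConv (conv H A f g) = toConv f * toConv g := rfl

theorem toConv_counitA : toConv (counitA H A) = 1 := rfl

theorem conv_algHom_eq_convMul (φ ψ : H →ₐ[ℂ] A) :
    conv H A φ.toLinearMap ψ.toLinearMap = (toConv φ * toConv ψ).ofConv.toLinearMap := rfl

theorem conv_comp_antipode_self (ψ : H →ₐ[ℂ] A) :
    conv H A ψ.toLinearMap (ψ.toLinearMap ∘ₗ HopfAlgebra.antipode ℂ) = counitA H A := by
  have := LinearMap.algHom_comp_convMul_distrib ψ (toConv LinearMap.id)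
    (toConv (HopfAlgebra.antipode ℂ))
  rw [LinearMap.id_mul_antipode] at this
  ext x
  simpa [conv, counitA] using congr($this.symm x)

theorem conv_conv_comp_antipode_self (f : H →ₗ[ℂ] A) (ψ : H →ₐ[ℂ] A) :
    conv H A (conv H A f ψ.toLinearMap) (ψ.toLinearMap ∘ₗ HopfAlgebra.antipode ℂ) = f := by
  apply toConv_injective
  rw [toConv_conv, toConv_conv, mul_assoc, ← toConv_conv ψ.toLinearMap, conv_comp_antipode_self,
    toConv_counitA, mul_one]

end Convolution

section Character

variable (φ : H →ₐ[ℂ] A)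

theorem sub_counitA_apply_mul (u w : H) :
    (φ.toLinearMap - counitA H A) (u * w) =
      (φ.toLinearMap - counitA H A) u * (φ.toLinearMap - counitA H A) w +
        (φ.toLinearMap - counitA H A) u * counitA H A w +
          counitA H A u * (φ.toLinearMap - counitA H A) w := by
  simp only [LinearMap.sub_apply, AlgHom.toLinearMap_apply, counitA, LinearMap.comp_apply,
    Algebra.linearMap_apply, map_mul, Bialgebra.counit_mul]
  ring

theorem sub_counitA_apply_eq_zero_of_mem_zero {ℬ : ℕ → Submodule ℂ H} (hconn : ℬ 0 = 1) {u : H}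
    (hu : u ∈ ℬ 0) : (φ.toLinearMap - counitA H A) u = 0 := by
  rw [hconn] at hu
  obtain ⟨c, rfl⟩ := Submodule.mem_one.mp hu
  simp [counitA]

end Character

section ConnectedGradedConvolution

variable {ℬ : ℕ → Submodule ℂ H}
  (hcomul : ∀ n, ∀ x ∈ ℬ n, Coalgebra.comul (R := ℂ) x ∈ tensorGrade ℬ n)
include hcomul

theorem conv_apply_eq_zero_of_mem {f ψ : H →ₗ[ℂ] A} (hf : ∀ u ∈ ℬ 0, f u = 0) {n : ℕ}
    (hψ : ∀ j < n, ∀ z ∈ ℬ j, ψ z = 0) {x : H} (hx : x ∈ ℬ n) : conv H A f ψ x = 0 := by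
  refine tensorGrade_induction (motive := fun t => LinearMap.mul' ℂ A (TensorProduct.map f ψ t) = 0)
    (by simp) (fun t s ht hs => by simp [ht, hs]) (fun p q hpq u hu v hv => ?_) (hcomul n x hx)
  rcases Nat.eq_zero_or_pos p with rfl | hp
  · simp [hf u hu]
  · simp [hψ q (by omega) v hv]

theorem isGradedContraction_bogoliubov (Q : A →ₗ[ℂ] A) {f : H →ₗ[ℂ] A}
    (hf : ∀ u ∈ ℬ 0, f u = 0) :
    IsGradedContraction ℬ fun ψ => counitA H A - Q ∘ₗ conv H A f ψ := by
  intro n ψ ψ' hagree x hx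
  have hsub : conv H A f (ψ - ψ') = conv H A f ψ - conv H A f ψ' :=
    toConv_injective (mul_sub (toConv f) (toConv ψ) (toConv ψ'))
  have := conv_apply_eq_zero_of_mem hcomul hf (ψ := ψ - ψ')
    (fun j hj z hz => sub_eq_zero.mpr (hagree j hj z hz)) hx
  rw [hsub, LinearMap.sub_apply, sub_eq_zero] at this
  simp [this]

end ConnectedGradedConvolution

/-- The Bogoliubov recursion defining the counterterm `φ₋`. -/
def IsCounterterm (Q : A →ₗ[ℂ] A) (φ : H →ₐ[ℂ] A) (ψ : H →ₗ[ℂ] A) : Prop :=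
  ψ = counitA H A - Q ∘ₗ conv H A (φ.toLinearMap - counitA H A) ψ

section Counterterm

variable {Q : A →ₗ[ℂ] A} {φ : H →ₐ[ℂ] A} {ψ : H →ₗ[ℂ] A}

theorem IsCounterterm.apply_of_counit_eq_zero (h : IsCounterterm Q φ ψ) {τ : H}
    (hτ : Coalgebra.counit (R := ℂ) τ = 0) :
    ψ τ = -Q (conv H A (φ.toLinearMap - counitA H A) ψ τ) := by
  conv_lhs => rw [h]
  simp [counitA, hτ]

theorem IsCounterterm.renormalized_eq_conv (h : IsCounterterm Q φ ψ) :
    counitA H A + (LinearMap.id - Q) ∘ₗ conv H A (φ.toLinearMap - counitA H A) ψ =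
      conv H A φ.toLinearMap ψ := by
  have hQ : Q ∘ₗ conv H A (φ.toLinearMap - counitA H A) ψ = counitA H A - ψ := by
    conv_rhs => rw [h]
    abel
  have hconv : conv H A (φ.toLinearMap - counitA H A) ψ = conv H A φ.toLinearMap ψ - ψ :=
    toConv_injective (by rw [toConv_conv, toConv_sub, toConv_counitA, sub_mul, one_mul]; rfl)
  rw [LinearMap.sub_comp, LinearMap.id_comp, hQ, hconv]
  abel

variable {ℬ : ℕ → Submodule ℂ H} (hconn : ℬ 0 = 1)
  (hcomul : ∀ n, ∀ x ∈ ℬ n, Coalgebra.comul (R := ℂ) x ∈ tensorGrade ℬ n)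

include hconn hcomul

theorem existsUnique_isCounterterm [DirectSum.Decomposition ℬ] : ∃! ψ, IsCounterterm Q φ ψ := by
  have hT := isGradedContraction_bogoliubov hcomul Q
    (fun u hu => sub_counitA_apply_eq_zero_of_mem_zero φ hconn hu)
  simpa only [IsCounterterm, Function.IsFixedPt, eq_comm] using hT.existsUnique_isFixedPt

theorem conv_sub_counitA_apply_mul {p q : ℕ}
    (hψ : ∀ a b, a + b < p + q → ∀ v ∈ ℬ a, ∀ z ∈ ℬ b, ψ (v * z) = ψ v * ψ z)
    {x y : H} (hx : x ∈ ℬ p) (hy : y ∈ ℬ q) :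
    conv H A (φ.toLinearMap - counitA H A) ψ (x * y) =
      conv H A (φ.toLinearMap - counitA H A) ψ x * conv H A (φ.toLinearMap - counitA H A) ψ y +
        conv H A (φ.toLinearMap - counitA H A) ψ x * ψ y +
          ψ x * conv H A (φ.toLinearMap - counitA H A) ψ y := by
  set f := φ.toLinearMap - counitA H A
  set F := LinearMap.mul' ℂ A ∘ₗ TensorProduct.map f ψ
  set G := LinearMap.mul' ℂ A ∘ₗ TensorProduct.map (counitA H A) ψ
  have hf : ∀ u ∈ ℬ 0, f u = 0 := fun u hu => sub_counitA_apply_eq_zero_of_mem_zero φ hconn hu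
  -- a term whose left factors both have degree 0 is killed by `f`; every other term has right
  -- factors of total degree `< p + q`, where `ψ` is multiplicative
  have pure : ∀ a b c d, a + b = p → c + d = q → ∀ u ∈ ℬ a, ∀ v ∈ ℬ b, ∀ w ∈ ℬ c, ∀ z ∈ ℬ d,
      F ((u ⊗ₜ v) * (w ⊗ₜ z)) = F (u ⊗ₜ v) * F (w ⊗ₜ z) + F (u ⊗ₜ v) * G (w ⊗ₜ z) +
        G (u ⊗ₜ v) * F (w ⊗ₜ z) := by
    intro a b c d hab hcd u hu v hv w hw z hz
    simp only [F, G, Algebra.TensorProduct.tmul_mul_tmul, LinearMap.comp_apply,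
      TensorProduct.map_tmul, LinearMap.mul'_apply]
    rw [sub_counitA_apply_mul φ u w]
    by_cases hac : a = 0 ∧ c = 0
    · rw [hf u (hac.1 ▸ hu), hf w (hac.2 ▸ hw)]
      ring
    · rw [hψ b d (by omega) v hv z hz]
      ring
  have key : ∀ t ∈ tensorGrade ℬ p, ∀ s ∈ tensorGrade ℬ q,
      F (t * s) = F t * F s + F t * G s + G t * F s := by
    intro t ht
    refine tensorGrade_induction (by simp) (fun t t' ht ht' s hs => ?_)
      (fun a b hab u hu v hv s hs => ?_) ht
    · simp only [add_mul, map_add, ht s hs, ht' s hs]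
      ring
    · refine tensorGrade_induction (by simp) (fun s s' hs hs' => ?_)
        (fun c d hcd w hw z hz => pure a b c d hab hcd u hu v hv w hw z hz) hs
      simp only [mul_add, map_add, hs, hs']
      ring
  have hG : ∀ x, G (Coalgebra.comul (R := ℂ) x) = ψ x := fun x =>
    congr(ofConv $(one_mul (toConv ψ)) x)
  have := key _ (hcomul p x hx) _ (hcomul q y hy)
  rwa [← Bialgebra.comul_mul, hG, hG] at this

theorem IsCounterterm.map_one (h : IsCounterterm Q φ ψ) : ψ 1 = 1 := by
  have hvanish : conv H A (φ.toLinearMap - counitA H A) ψ 1 = 0 :=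
    conv_apply_eq_zero_of_mem hcomul
      (fun u hu => sub_counitA_apply_eq_zero_of_mem_zero φ hconn hu) (n := 0)
      (fun j hj => absurd hj (Nat.not_lt_zero j)) (hconn ▸ Submodule.one_le.mp le_rfl)
  rw [h, LinearMap.sub_apply, LinearMap.comp_apply, hvanish, map_zero, sub_zero]
  simp [counitA]

theorem IsCounterterm.map_mul [GradedAlgebra ℬ]
    (hQ : ∀ a b : A, Q a * Q b = Q (Q a * b + a * Q b) - Q (a * b))
    (h : IsCounterterm Q φ ψ) (x y : H) : ψ (x * y) = ψ x * ψ y := by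
  have hone := h.map_one hconn hcomul
  set ρ := conv H A (φ.toLinearMap - counitA H A) ψ
  have homogeneous : ∀ n p q, p + q = n → ∀ x ∈ ℬ p, ∀ y ∈ ℬ q, ψ (x * y) = ψ x * ψ y := by
    intro n
    induction n using Nat.strong_induction_on with
    | _ n ih =>
    intro p q hpq x hx y hy
    rcases Nat.eq_zero_or_pos p with rfl | hp
    · obtain ⟨c, rfl⟩ := Submodule.mem_one.mp (hconn ▸ hx)
      simp [Algebra.algebraMap_eq_smul_one, hone]
    rcases Nat.eq_zero_or_pos q with rfl | hq
    · obtain ⟨c, rfl⟩ := Submodule.mem_one.mp (hconn ▸ hy)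
      simp [Algebra.algebraMap_eq_smul_one, hone]
    have hρ := conv_sub_counitA_apply_mul hconn hcomul (φ := φ)
      (fun a b hab v hv z hz => ih (a + b) (by omega) a b rfl v hv z hz) hx hy
    have hneg : ∀ {m}, m ≠ 0 → ∀ {z}, z ∈ ℬ m → ψ z = -Q (ρ z) := fun hm _ hz =>
      h.apply_of_counit_eq_zero (counit_eq_zero_of_mem ℬ hconn hcomul hm hz)
    -- weight `−1` Rota–Baxter: `−Q (ρx ρy − ρx Qρy − Qρx ρy) = Qρx Qρy`
    rw [hneg (m := p + q) (by omega) (SetLike.mul_mem_graded hx hy), hρ, hneg (by omega) hx,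
      hneg (by omega) hy, neg_mul_neg, hQ]
    simp only [mul_neg, neg_mul, map_add, map_neg]
    abel
  exact map_mul_of_map_mul_of_mem_grade ℬ ψ
    (fun i j x hx y hy => homogeneous _ i j rfl x hx y hy) x y

end Counterterm

theorem algebraic_birkhoff_factorisation_general
    (ℬ : ℕ → Submodule ℂ H) [GradedAlgebra ℬ]
    (hconn : ℬ 0 = 1)
    (hgr : ∀ n, ∀ x ∈ ℬ n, Coalgebra.comul (R := ℂ) x ∈
      ⨆ (p : ℕ × ℕ) (_ : p.1 + p.2 = n),
        LinearMap.range (TensorProduct.map (ℬ p.1).subtype (ℬ p.2).subtype))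
    (Q : A →ₗ[ℂ] A)
    (hQrb : ∀ a b : A, Q a * Q b = Q (Q a * b + a * Q b) - Q (a * b))
    (φ : H →ₐ[ℂ] A) :
    (∃! φm : H →ₗ[ℂ] A,
        φm = counitA H A - Q ∘ₗ conv H A (φ.toLinearMap - counitA H A) φm)
      ∧ ∀ φm : H →ₗ[ℂ] A,
          φm = counitA H A - Q ∘ₗ conv H A (φ.toLinearMap - counitA H A) φm →
          ∀ φp : H →ₗ[ℂ] A,
            φp = counitA H A
                + (LinearMap.id - Q) ∘ₗ conv H A (φ.toLinearMap - counitA H A) φm →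
            (φm 1 = 1 ∧ ∀ a b : H, φm (a * b) = φm a * φm b)
              ∧ (φp 1 = 1 ∧ ∀ a b : H, φp (a * b) = φp a * φp b)
              ∧ (∀ τ : H, Coalgebra.counit (R := ℂ) τ = 0 →
                  φm τ ∈ LinearMap.range Q
                    ∧ φp τ ∈ LinearMap.range (LinearMap.id - Q))
              ∧ φ.toLinearMap
                  = conv H A φp (φm ∘ₗ HopfAlgebra.antipode (R := ℂ)) := by
  have hcomul : ∀ n, ∀ x ∈ ℬ n, Coalgebra.comul (R := ℂ) x ∈ tensorGrade ℬ n := hgr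
  refine ⟨existsUnique_isCounterterm hconn hcomul, fun φm hφm φp hφp => ?_⟩
  replace hφm : IsCounterterm Q φ φm := hφm
  have hone := hφm.map_one hconn hcomul
  have hmul := hφm.map_mul hconn hcomul hQrb
  let φm' : H →ₐ[ℂ] A := AlgHom.ofLinearMap φm hone hmul
  have hφp' : φp = (toConv φ * toConv φm').ofConv.toLinearMap := by
    rw [hφp, hφm.renormalized_eq_conv]
    exact conv_algHom_eq_convMul φ φm'
  refine ⟨⟨hone, hmul⟩, ⟨by simp [hφp'], by simp [hφp']⟩,
    fun τ hτ => ⟨⟨-conv H A (φ.toLinearMap - counitA H A) φm τ,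
      (map_neg Q _).trans (hφm.apply_of_counit_eq_zero hτ).symm⟩,
      ⟨conv H A (φ.toLinearMap - counitA H A) φm τ, ?_⟩⟩, ?_⟩
  · rw [hφp]
    simp [counitA, hτ]
  · rw [hφp, hφm.renormalized_eq_conv]
    exact (conv_conv_comp_antipode_self φ.toLinearMap φm').symm

/-- Algebraic Birkhoff factorisation, Connes–Kreimer: for a
connected graded Hopf algebra `H` over `ℂ`, a commutative unital algebra `A`
with a linear Rota–Baxter projection `Q` of weight `−1`, and any character
`φ : H →ₐ[ℂ] A`, the Bogoliubov recursions
`φ₋ = 1* − Q((φ − 1*) ⋆ φ₋)` and `φ₊ = 1* + (id−Q)((φ − 1*) ⋆ φ₋)` have a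
unique solution; the resulting maps are algebra morphisms taking values (on
the augmentation ideal) in `Q(A)` resp. `(id−Q)(A)`, and they satisfy the
factorisation `φ = φ₊ ⋆ φ₋⁻¹ = φ₊ ⋆ (φ₋ ∘ 𝒜)`. -/
theorem algebraic_birkhoff_factorisation
    (ℬ : ℕ → Submodule ℂ H) [GradedAlgebra ℬ]
    (hconn : ℬ 0 = 1)
    (hgr : ∀ n, ∀ x ∈ ℬ n, Coalgebra.comul (R := ℂ) x ∈
      ⨆ (p : ℕ × ℕ) (_ : p.1 + p.2 = n),
        LinearMap.range (TensorProduct.map (ℬ p.1).subtype (ℬ p.2).subtype))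
    (Q : A →ₗ[ℂ] A) (hQproj : Q ∘ₗ Q = Q)
    (hQrb : ∀ a b : A, Q a * Q b = Q (Q a * b + a * Q b) - Q (a * b))
    (φ : H →ₐ[ℂ] A) :
    (∃! φm : H →ₗ[ℂ] A,
        φm = counitA H A - Q ∘ₗ conv H A (φ.toLinearMap - counitA H A) φm)
      ∧ ∀ φm : H →ₗ[ℂ] A,
          φm = counitA H A - Q ∘ₗ conv H A (φ.toLinearMap - counitA H A) φm →
          ∀ φp : H →ₗ[ℂ] A,
            φp = counitA H A
                + (LinearMap.id - Q) ∘ₗ conv H A (φ.toLinearMap - counitA H A) φm →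
            (φm 1 = 1 ∧ ∀ a b : H, φm (a * b) = φm a * φm b)
              ∧ (φp 1 = 1 ∧ ∀ a b : H, φp (a * b) = φp a * φp b)
              ∧ (∀ τ : H, Coalgebra.counit (R := ℂ) τ = 0 →
                  φm τ ∈ LinearMap.range Q
                    ∧ φp τ ∈ LinearMap.range (LinearMap.id - Q))
              ∧ φ.toLinearMap
                  = conv H A φp (φm ∘ₗ HopfAlgebra.antipode (R := ℂ)) :=
  algebraic_birkhoff_factorisation_general ℬ hconn hgr Q hQrb φ
end

section
/- With the modified reduced coproduct Δ⁺_red defined by Δ⁺_red X^{k₀} = 0 and Δ⁺_red τ̂ = Δ̂⁺τ̂ − τ̂⊗1 − (polynomial part) on general decorated trees, the recursion Δ⁺_red 𝓘_{(𝔱,p)}(τ̂) = (𝓘_{(𝔱,p)} ⊗ γ) Δ̂⁺ τ̂ holds, where γ = id − 1* is the augmentation projector. -/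
open scoped TensorProduct BigOperators

/-- recursion for the modified reduced coproduct on decorated
trees.  `T` is the (commutative) algebra of decorated trees, `X ℓ` denotes the
monomial `X^ℓ`, `I ℓ` is the planted-tree (grafting) map `𝓘_{(𝔱,p+ℓ)}`,
`πp` is the projection `π₊`, `Δ` is the coaction `Δ̂⁺ = (id ⊗ π₊)Δ⁺` and
`ε` is the counit `1*`.  Given that `Δ̂⁺` acts on planted trees by
`Δ̂⁺𝓘_{(𝔱,p)}(τ̂) = 1⊗π₊𝓘_{(𝔱,p)}(τ̂) + (𝓘_{(𝔱,p)}⊗id)Δ̂⁺τ̂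
  + ∑_{ℓ≠0} X^ℓ/ℓ! ⊗ π₊𝓘_{(𝔱,p+ℓ)}(τ̂)`,
the modified reduced coproduct
`Δ⁺_red 𝓘_{(𝔱,p)}(τ̂) = Δ̂⁺𝓘_{(𝔱,p)}(τ̂) − 𝓘_{(𝔱,p)}(τ̂)⊗1
  − ∑_ℓ X^ℓ/ℓ! ⊗ π₊𝓘_{(𝔱,p+ℓ)}(τ̂)`
satisfies `Δ⁺_red 𝓘_{(𝔱,p)}(τ̂) = (𝓘_{(𝔱,p)} ⊗ γ) Δ̂⁺ τ̂` where
`γ = id − 1*` is the augmentation projector. -/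
theorem modified_reduced_coproduct_recursion {d : ℕ}
    (T : Type) [CommRing T] [Algebra ℝ T]
    (X : (Fin (d + 1) → ℕ) → T) (hX0 : X 0 = 1)
    (I : (Fin (d + 1) → ℕ) → (T →ₗ[ℝ] T))
    (πp : T →ₗ[ℝ] T)
    (Δ : T →ₗ[ℝ] T ⊗[ℝ] T)
    (ε : T →ₗ[ℝ] ℝ) (hε1 : ε 1 = 1)
    (hcounit : ∀ τ : T,
      TensorProduct.rid ℝ T ((TensorProduct.map LinearMap.id ε) (Δ τ)) = τ)
    (hfin : ∀ τ : T, (Function.support (fun ℓ : Fin (d + 1) → ℕ =>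
      ((∏ i, ((ℓ i).factorial : ℝ))⁻¹ • X ℓ) ⊗ₜ[ℝ] πp (I ℓ τ))).Finite)
    (hΔI : ∀ τ : T, Δ (I 0 τ)
      = (1 : T) ⊗ₜ[ℝ] πp (I 0 τ)
        + (TensorProduct.map (I 0) LinearMap.id) (Δ τ)
        + ∑ᶠ (ℓ : Fin (d + 1) → ℕ) (_ : ℓ ≠ 0),
            ((∏ i, ((ℓ i).factorial : ℝ))⁻¹ • X ℓ) ⊗ₜ[ℝ] πp (I ℓ τ)) :
    ∀ τ : T,
      Δ (I 0 τ) - (I 0 τ) ⊗ₜ[ℝ] 1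
          - ∑ᶠ ℓ : Fin (d + 1) → ℕ,
              ((∏ i, ((ℓ i).factorial : ℝ))⁻¹ • X ℓ) ⊗ₜ[ℝ] πp (I ℓ τ)
        = (TensorProduct.map (I 0)
            (LinearMap.id - (LinearMap.toSpanSingleton ℝ T 1) ∘ₗ ε)) (Δ τ) := by
  intro τ
  set f : (Fin (d + 1) → ℕ) → T ⊗[ℝ] T := fun ℓ =>
    ((∏ i, ((ℓ i).factorial : ℝ))⁻¹ • X ℓ) ⊗ₜ[ℝ] πp (I ℓ τ) with hf
  have hf0 : f 0 = (1 : T) ⊗ₜ[ℝ] πp (I 0 τ) := by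
    simp [hf, hX0]
  -- split the full finsum
  have hsplit : ∑ᶠ ℓ, f ℓ = f 0 + ∑ᶠ (ℓ) (_ : ℓ ≠ 0), f ℓ := by
    have h1 : ∑ᶠ (ℓ) (_ : ℓ ≠ 0), f ℓ = ∑ᶠ ℓ ∈ ({0}ᶜ : Set _), f ℓ := rfl
    have h2 : ∑ᶠ ℓ, f ℓ = ∑ᶠ ℓ ∈ insert (0 : Fin (d+1) → ℕ) ({0}ᶜ : Set _), f ℓ := by
      rw [Set.insert_eq, Set.union_compl_self, finsum_mem_univ]
    rw [h2, finsum_mem_insert' f (by simp)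
      (Set.Finite.subset (hfin τ) Set.inter_subset_right), h1]
  -- the key identity
  have hkey : (TensorProduct.map (I 0) ((LinearMap.toSpanSingleton ℝ T 1) ∘ₗ ε)) (Δ τ)
      = (I 0 τ) ⊗ₜ[ℝ] 1 := by
    have heq : TensorProduct.map (I 0) ((LinearMap.toSpanSingleton ℝ T 1) ∘ₗ ε)
        = ((TensorProduct.mk ℝ T T).flip 1 ∘ₗ I 0) ∘ₗ
          ((TensorProduct.rid ℝ T).toLinearMap ∘ₗ TensorProduct.map LinearMap.id ε) := by
      apply TensorProduct.ext'
      intro a b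
      simp only [TensorProduct.map_tmul, LinearMap.coe_comp, Function.comp_apply,
        LinearMap.toSpanSingleton_apply, LinearMap.id_coe, id_eq,
        LinearEquiv.coe_coe, TensorProduct.rid_tmul, map_smul,
        TensorProduct.tmul_smul, TensorProduct.smul_tmul',
        TensorProduct.mk_apply, LinearMap.flip_apply]
    rw [heq]
    simp [hcounit τ]
  have hsub : (TensorProduct.map (I 0)
      (LinearMap.id - (LinearMap.toSpanSingleton ℝ T 1) ∘ₗ ε)) (Δ τ)
      = (TensorProduct.map (I 0) LinearMap.id) (Δ τ)
        - (TensorProduct.map (I 0) ((LinearMap.toSpanSingleton ℝ T 1) ∘ₗ ε)) (Δ τ) := by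
    have : TensorProduct.map (I 0) (LinearMap.id - (LinearMap.toSpanSingleton ℝ T 1) ∘ₗ ε)
        = TensorProduct.map (I 0) LinearMap.id
          - TensorProduct.map (I 0) ((LinearMap.toSpanSingleton ℝ T 1) ∘ₗ ε) := by
      apply TensorProduct.ext'
      intro a b
      simp [TensorProduct.tmul_sub]
    rw [this]; rfl
  rw [hΔI τ, hsplit, hf0, hsub, hkey]
  abel
end

section
/- Let T_{α,x,·} be the family of 𝔰-scaled Taylor jet operators, extended by T_{α,x,·} = 0 for α ≤ 0. Then for f, g smooth and any α, β ∈ ℝ one has T_{α,x,·}(f)·T_{β,x,·}(g) = T_{α+β,x,·}(T_{α,x,·}(f)·g + f·T_{β,x,·}(g) − f·g), and this holds also when α or β is nonpositive. -/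
open scoped BigOperators

namespace RB

variable {n : ℕ}



lemma pderiv'_contDiff {f : (Fin n → ℝ) → ℝ} (hf : ContDiff ℝ (⊤ : ℕ∞) f) (i : Fin n) :
    ContDiff ℝ (⊤ : ℕ∞) (pderiv' i f) :=
  (hf.fderiv_right (le_refl _)).clm_apply contDiff_const

lemma pderiv'_add {f g : (Fin n → ℝ) → ℝ} (hf : Differentiable ℝ f)
    (hg : Differentiable ℝ g) (i : Fin n) :
    pderiv' i (fun y => f y + g y) = fun y => pderiv' i f y + pderiv' i g y := by
  funext y
  simp [pderiv', fderiv_fun_add (hf y) (hg y)]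

lemma pderiv'_sub {f g : (Fin n → ℝ) → ℝ} (hf : Differentiable ℝ f)
    (hg : Differentiable ℝ g) (i : Fin n) :
    pderiv' i (fun y => f y - g y) = fun y => pderiv' i f y - pderiv' i g y := by
  funext y
  simp [pderiv', fderiv_fun_sub (hf y) (hg y)]

lemma pderiv'_const_mul (c : ℝ) {f : (Fin n → ℝ) → ℝ} (hf : Differentiable ℝ f) (i : Fin n) :
    pderiv' i (fun y => c * f y) = fun y => c * pderiv' i f y := by
  funext y
  simp [pderiv', fderiv_const_mul (hf y) c]

lemma pderiv'_mul {f g : (Fin n → ℝ) → ℝ} (hf : Differentiable ℝ f)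
    (hg : Differentiable ℝ g) (i : Fin n) :
    pderiv' i (fun y => f y * g y) = fun y => pderiv' i f y * g y + f y * pderiv' i g y := by
  funext y
  simp only [pderiv', fderiv_fun_mul (hf y) (hg y)]
  simp [mul_comm, add_comm]

lemma pderiv'_sum {ι : Type*} (A : Finset ι) (F : ι → (Fin n → ℝ) → ℝ)
    (hF : ∀ t ∈ A, Differentiable ℝ (F t)) (i : Fin n) :
    pderiv' i (fun y => ∑ t ∈ A, F t y) = fun y => ∑ t ∈ A, pderiv' i (F t) y := by
  funext y
  have : fderiv ℝ (fun y => ∑ t ∈ A, F t y) y = ∑ t ∈ A, fderiv ℝ (F t) y := by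
    exact fderiv_fun_sum fun t ht => (hF t ht) y
  simp [pderiv', this]



lemma pascal_sum (A B : ℕ → ℝ) (k : ℕ) :
    ∑ j ∈ Finset.range (k+1), (k.choose j : ℝ) * (A (j+1) * B (k-j))
      + ∑ j ∈ Finset.range (k+1), (k.choose j : ℝ) * (A j * B (k-j+1))
    = ∑ j ∈ Finset.range (k+2), ((k+1).choose j : ℝ) * (A j * B (k+1-j)) := by
  rw [Finset.sum_range_succ' (fun j => ((k+1).choose j : ℝ) * (A j * B (k+1-j))) (k+1)]
  have h1 : ∀ j ∈ Finset.range (k+1),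
      (((k+1).choose (j+1) : ℝ)) * (A (j+1) * B (k+1-(j+1)))
        = (k.choose j : ℝ) * (A (j+1) * B (k-j)) + (k.choose (j+1) : ℝ) * (A (j+1) * B (k-j)) := by
    intro j hj
    have h2 : k+1-(j+1) = k-j := by omega
    rw [h2, Nat.choose_succ_succ]
    push_cast
    ring
  rw [Finset.sum_congr rfl h1, Finset.sum_add_distrib]
  have h3 : ∑ j ∈ Finset.range (k+1), (k.choose (j+1) : ℝ) * (A (j+1) * B (k-j))
      + ((k+1).choose 0 : ℝ) * (A 0 * B (k+1-0))
      = ∑ j ∈ Finset.range (k+1), (k.choose j : ℝ) * (A j * B (k-j+1)) := by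
    have h4 : ∑ j ∈ Finset.range (k+2), (k.choose j : ℝ) * (A j * B (k+1-j))
        = ∑ j ∈ Finset.range (k+1), (k.choose (j+1) : ℝ) * (A (j+1) * B (k+1-(j+1)))
          + (k.choose 0 : ℝ) * (A 0 * B (k+1-0)) :=
      Finset.sum_range_succ' _ (k+1)
    have h5 : ∑ j ∈ Finset.range (k+2), (k.choose j : ℝ) * (A j * B (k+1-j))
        = ∑ j ∈ Finset.range (k+1), (k.choose j : ℝ) * (A j * B (k+1-j)) := by
      rw [Finset.sum_range_succ]
      simp [Nat.choose_succ_self]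
    have h6 : ∀ j ∈ Finset.range (k+1),
        (k.choose j : ℝ) * (A j * B (k+1-j)) = (k.choose j : ℝ) * (A j * B (k-j+1)) := by
      intro j hj
      simp only [Finset.mem_range] at hj
      have : k+1-j = k-j+1 := by omega
      rw [this]
    calc ∑ j ∈ Finset.range (k+1), (k.choose (j+1) : ℝ) * (A (j+1) * B (k-j))
          + ((k+1).choose 0 : ℝ) * (A 0 * B (k+1-0))
        = ∑ j ∈ Finset.range (k+1), (k.choose (j+1) : ℝ) * (A (j+1) * B (k+1-(j+1)))
          + (k.choose 0 : ℝ) * (A 0 * B (k+1-0)) := by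
          congr 1
          · refine Finset.sum_congr rfl fun j hj => ?_
            have : k+1-(j+1) = k-j := by omega
            rw [this]
          · simp
        _ = ∑ j ∈ Finset.range (k+2), (k.choose j : ℝ) * (A j * B (k+1-j)) := h4.symm
        _ = ∑ j ∈ Finset.range (k+1), (k.choose j : ℝ) * (A j * B (k+1-j)) := h5
        _ = ∑ j ∈ Finset.range (k+1), (k.choose j : ℝ) * (A j * B (k-j+1)) :=
            Finset.sum_congr rfl h6
  rw [add_assoc, h3]



lemma smdiff {m : ℕ} {f : (Fin m → ℝ) → ℝ} (hf : ContDiff ℝ (⊤ : ℕ∞) f) :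
    Differentiable ℝ f := hf.differentiable (by simp)

lemma iter_contDiff {f : (Fin n → ℝ) → ℝ} (hf : ContDiff ℝ (⊤ : ℕ∞) f) (i : Fin n) (k : ℕ) :
    ContDiff ℝ (⊤ : ℕ∞) ((pderiv' i)^[k] f) := by
  induction k with
  | zero => exact hf
  | succ k ih => rw [Function.iterate_succ_apply']; exact pderiv'_contDiff ih i

lemma iter_add {f g : (Fin n → ℝ) → ℝ} (hf : ContDiff ℝ (⊤ : ℕ∞) f)
    (hg : ContDiff ℝ (⊤ : ℕ∞) g) (i : Fin n) (k : ℕ) :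
    (pderiv' i)^[k] (fun y => f y + g y)
      = fun y => (pderiv' i)^[k] f y + (pderiv' i)^[k] g y := by
  induction k with
  | zero => rfl
  | succ k ih =>
    rw [Function.iterate_succ_apply', ih, Function.iterate_succ_apply',
      Function.iterate_succ_apply',
      pderiv'_add (smdiff (iter_contDiff hf i k)) (smdiff (iter_contDiff hg i k))]

lemma iter_sub {f g : (Fin n → ℝ) → ℝ} (hf : ContDiff ℝ (⊤ : ℕ∞) f)
    (hg : ContDiff ℝ (⊤ : ℕ∞) g) (i : Fin n) (k : ℕ) :
    (pderiv' i)^[k] (fun y => f y - g y)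
      = fun y => (pderiv' i)^[k] f y - (pderiv' i)^[k] g y := by
  induction k with
  | zero => rfl
  | succ k ih =>
    rw [Function.iterate_succ_apply', ih, Function.iterate_succ_apply',
      Function.iterate_succ_apply',
      pderiv'_sub (smdiff (iter_contDiff hf i k)) (smdiff (iter_contDiff hg i k))]

lemma iter_const_mul (c : ℝ) {f : (Fin n → ℝ) → ℝ} (hf : ContDiff ℝ (⊤ : ℕ∞) f)
    (i : Fin n) (k : ℕ) :
    (pderiv' i)^[k] (fun y => c * f y) = fun y => c * (pderiv' i)^[k] f y := by
  induction k with
  | zero => rfl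
  | succ k ih =>
    rw [Function.iterate_succ_apply', ih, Function.iterate_succ_apply',
      pderiv'_const_mul c (smdiff (iter_contDiff hf i k))]

lemma iter_sum {ι : Type*} (A : Finset ι) (F : ι → (Fin n → ℝ) → ℝ)
    (hF : ∀ t ∈ A, ContDiff ℝ (⊤ : ℕ∞) (F t)) (i : Fin n) (k : ℕ) :
    (pderiv' i)^[k] (fun y => ∑ t ∈ A, F t y) = fun y => ∑ t ∈ A, (pderiv' i)^[k] (F t) y := by
  induction k with
  | zero => rfl
  | succ k ih =>
    rw [Function.iterate_succ_apply', ih,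
      pderiv'_sum A (fun t => (pderiv' i)^[k] (F t))
        (fun t ht => smdiff (iter_contDiff (hF t ht) i k)) i]
    funext y
    refine Finset.sum_congr rfl fun t ht => ?_
    rw [Function.iterate_succ_apply']

lemma iter_leibniz {f g : (Fin n → ℝ) → ℝ} (hf : ContDiff ℝ (⊤ : ℕ∞) f)
    (hg : ContDiff ℝ (⊤ : ℕ∞) g) (i : Fin n) (k : ℕ) :
    (pderiv' i)^[k] (fun y => f y * g y)
      = fun y => ∑ j ∈ Finset.range (k + 1),
          (k.choose j : ℝ) * ((pderiv' i)^[j] f y * (pderiv' i)^[k - j] g y) := by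
  induction k with
  | zero => simp
  | succ k ih =>
    rw [Function.iterate_succ_apply', ih]
    have hdf : ∀ j : ℕ, Differentiable ℝ ((pderiv' i)^[j] f) :=
      fun j => (smdiff (iter_contDiff hf i j))
    have hdg : ∀ j : ℕ, Differentiable ℝ ((pderiv' i)^[j] g) :=
      fun j => (smdiff (iter_contDiff hg i j))
    rw [pderiv'_sum _ _ (fun t _ => by
      exact smdiff (contDiff_const.mul ((iter_contDiff hf i t).mul (iter_contDiff hg i (k - t))))) i]
    funext y
    have step : ∀ j, pderiv' i
        (fun y => (k.choose j : ℝ) * ((pderiv' i)^[j] f y * (pderiv' i)^[k - j] g y))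
        = fun y => (k.choose j : ℝ) * ((pderiv' i)^[j+1] f y * (pderiv' i)^[k - j] g y)
          + (k.choose j : ℝ) * ((pderiv' i)^[j] f y * (pderiv' i)^[(k - j)+1] g y) := by
      intro j
      rw [pderiv'_const_mul _ (f := fun y => (pderiv' i)^[j] f y * (pderiv' i)^[k - j] g y) ((hdf j).mul (hdg (k-j))) i,
        pderiv'_mul (hdf j) (hdg (k-j)) i]
      funext y
      rw [← Function.iterate_succ_apply' (pderiv' i) j, ← Function.iterate_succ_apply' (pderiv' i) (k-j)]
      ring
    simp only [step]
    rw [Finset.sum_add_distrib]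
    exact pascal_sum (fun j => (pderiv' i)^[j] f y) (fun j => (pderiv' i)^[j] g y) k


noncomputable def Dsuf (L : List (Fin n)) (ℓ : Fin n → ℕ) (f : (Fin n → ℝ) → ℝ) :
    (Fin n → ℝ) → ℝ :=
  ((L.map fun i => (pderiv' i)^[ℓ i]).foldr (· ∘ ·) id) f

lemma Dsuf_nil (ℓ : Fin n → ℕ) (f : (Fin n → ℝ) → ℝ) : Dsuf [] ℓ f = f := rfl

lemma Dsuf_cons (i : Fin n) (L : List (Fin n)) (ℓ : Fin n → ℕ) (f : (Fin n → ℝ) → ℝ) :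
    Dsuf (i :: L) ℓ f = (pderiv' i)^[ℓ i] (Dsuf L ℓ f) := rfl

lemma Dsuf_contDiff (L : List (Fin n)) (ℓ : Fin n → ℕ) {f : (Fin n → ℝ) → ℝ}
    (hf : ContDiff ℝ (⊤ : ℕ∞) f) : ContDiff ℝ (⊤ : ℕ∞) (Dsuf L ℓ f) := by
  induction L with
  | nil => exact hf
  | cons i L ih => rw [Dsuf_cons]; exact iter_contDiff ih i (ℓ i)

lemma Dsuf_congr (L : List (Fin n)) {ℓ ℓ' : Fin n → ℕ} (f : (Fin n → ℝ) → ℝ)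
    (h : ∀ i ∈ L, ℓ i = ℓ' i) : Dsuf L ℓ f = Dsuf L ℓ' f := by
  induction L with
  | nil => rfl
  | cons i L ih =>
    rw [Dsuf_cons, Dsuf_cons, ih (fun t ht => h t (List.mem_cons_of_mem i ht)),
      h i List.mem_cons_self]

lemma Dsuf_add (L : List (Fin n)) (ℓ : Fin n → ℕ) {f g : (Fin n → ℝ) → ℝ}
    (hf : ContDiff ℝ (⊤ : ℕ∞) f) (hg : ContDiff ℝ (⊤ : ℕ∞) g) :
    Dsuf L ℓ (fun y => f y + g y) = fun y => Dsuf L ℓ f y + Dsuf L ℓ g y := by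
  induction L with
  | nil => rfl
  | cons i L ih =>
    rw [Dsuf_cons, ih, iter_add (Dsuf_contDiff L ℓ hf) (Dsuf_contDiff L ℓ hg) i (ℓ i)]
    rfl

lemma Dsuf_sub (L : List (Fin n)) (ℓ : Fin n → ℕ) {f g : (Fin n → ℝ) → ℝ}
    (hf : ContDiff ℝ (⊤ : ℕ∞) f) (hg : ContDiff ℝ (⊤ : ℕ∞) g) :
    Dsuf L ℓ (fun y => f y - g y) = fun y => Dsuf L ℓ f y - Dsuf L ℓ g y := by
  induction L with
  | nil => rfl
  | cons i L ih =>
    rw [Dsuf_cons, ih, iter_sub (Dsuf_contDiff L ℓ hf) (Dsuf_contDiff L ℓ hg) i (ℓ i)]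
    rfl

lemma Dsuf_const_mul (L : List (Fin n)) (ℓ : Fin n → ℕ) (c : ℝ) {f : (Fin n → ℝ) → ℝ}
    (hf : ContDiff ℝ (⊤ : ℕ∞) f) :
    Dsuf L ℓ (fun y => c * f y) = fun y => c * Dsuf L ℓ f y := by
  induction L with
  | nil => rfl
  | cons i L ih =>
    rw [Dsuf_cons, ih, iter_const_mul c (Dsuf_contDiff L ℓ hf) i (ℓ i)]
    rfl

lemma Dsuf_sum (L : List (Fin n)) (ℓ : Fin n → ℕ) {ι : Type*} (A : Finset ι)
    (F : ι → (Fin n → ℝ) → ℝ) (hF : ∀ t ∈ A, ContDiff ℝ (⊤ : ℕ∞) (F t)) :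
    Dsuf L ℓ (fun y => ∑ t ∈ A, F t y) = fun y => ∑ t ∈ A, Dsuf L ℓ (F t) y := by
  induction L with
  | nil => rfl
  | cons i L ih =>
    rw [Dsuf_cons, ih, iter_sum A (fun t => Dsuf L ℓ (F t))
      (fun t ht => Dsuf_contDiff L ℓ (hF t ht)) i (ℓ i)]
    rfl

noncomputable def boxOn (L : List (Fin n)) (ℓ : Fin n → ℕ) : Finset (Fin n → ℕ) :=
  Fintype.piFinset fun i => Finset.range (if i ∈ L then ℓ i + 1 else 1)

lemma Dsuf_leibniz {L : List (Fin n)} (hL : L.Nodup) (ℓ : Fin n → ℕ)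
    {f g : (Fin n → ℝ) → ℝ} (hf : ContDiff ℝ (⊤ : ℕ∞) f) (hg : ContDiff ℝ (⊤ : ℕ∞) g) :
    Dsuf L ℓ (fun y => f y * g y)
      = fun y => ∑ j ∈ boxOn L ℓ, (∏ t, ((ℓ t).choose (j t) : ℝ))
          * (Dsuf L j f y * Dsuf L (fun t => ℓ t - j t) g y) := by
  induction L with
  | nil =>
    have hbox : boxOn ([] : List (Fin n)) ℓ = {fun _ => 0} := by
      ext j
      simp [boxOn, Fintype.mem_piFinset, Nat.lt_one_iff, funext_iff]
    rw [hbox]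
    funext y
    simp [Dsuf_nil]
  | cons i L ih =>
    have hiL : i ∉ L := (List.nodup_cons.mp hL).1
    have hLnd : L.Nodup := (List.nodup_cons.mp hL).2
    rw [Dsuf_cons, ih hLnd]
    rw [iter_sum _ _ (fun j _ => contDiff_const.mul
      ((Dsuf_contDiff L j hf).mul (Dsuf_contDiff L _ hg))) i (ℓ i)]
    funext y
    have step : ∀ j ∈ boxOn L ℓ,
        (pderiv' i)^[ℓ i] (fun z => (∏ t, ((ℓ t).choose (j t) : ℝ))
            * (Dsuf L j f z * Dsuf L (fun t => ℓ t - j t) g z)) y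
        = ∑ r ∈ Finset.range (ℓ i + 1),
            (∏ t, ((ℓ t).choose (j t) : ℝ)) * ((ℓ i).choose r : ℝ)
            * (Dsuf (i :: L) (Function.update j i r) f y
              * Dsuf (i :: L) (fun t => ℓ t - Function.update j i r t) g y) := by
      intro j hj
      rw [iter_const_mul _ ((Dsuf_contDiff L j hf).mul (Dsuf_contDiff L _ hg)),
        iter_leibniz (Dsuf_contDiff L j hf) (Dsuf_contDiff L _ hg) i (ℓ i)]
      beta_reduce
      rw [Finset.mul_sum]
      refine Finset.sum_congr rfl fun r hr => ?_
      have hUf : (pderiv' i)^[r] (Dsuf L j f) = Dsuf (i :: L) (Function.update j i r) f := by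
        rw [Dsuf_cons, Function.update_self]
        congr 1
        exact Dsuf_congr L f fun t ht =>
          (Function.update_of_ne (fun hti => hiL (by rwa [hti] at ht)) r j).symm
      have hVg : (pderiv' i)^[ℓ i - r] (Dsuf L (fun t => ℓ t - j t) g)
          = Dsuf (i :: L) (fun t => ℓ t - Function.update j i r t) g := by
        rw [Dsuf_cons]
        simp only [Function.update_self]
        congr 1
        exact Dsuf_congr L g fun t ht => by
          have h2 : Function.update j i r t = j t :=
            Function.update_of_ne (fun hti => hiL (by rwa [hti] at ht)) r j
          simp [h2]
      rw [hUf, hVg]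
      ring
    rw [Finset.sum_congr rfl step]
    -- reindex the double sum
    rw [← Finset.sum_product']
    refine Finset.sum_nbij' (fun p => Function.update p.1 i p.2)
      (fun q => (Function.update q i 0, q i)) ?_ ?_ ?_ ?_ ?_
    · rintro ⟨j, r⟩ hp
      simp only [Finset.mem_product, Finset.mem_range] at hp
      simp only [boxOn, Fintype.mem_piFinset, Finset.mem_range] at hp ⊢
      intro t
      by_cases ht : t = i
      · subst ht; simpa [List.mem_cons] using hp.2
      · rw [Function.update_of_ne ht]
        have := hp.1 t
        by_cases htL : t ∈ L
        · simpa [htL, List.mem_cons, ht] using this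
        · simpa [htL, List.mem_cons, ht] using this
    · intro q hq
      simp only [boxOn, Fintype.mem_piFinset, Finset.mem_range] at hq
      simp only [Finset.mem_product, Finset.mem_range, boxOn, Fintype.mem_piFinset]
      constructor
      · intro t
        by_cases ht : t = i
        · subst ht; simp [hiL]
        · rw [Function.update_of_ne ht]
          have := hq t
          by_cases htL : t ∈ L
          · simpa [htL, List.mem_cons, ht] using this
          · simpa [htL, List.mem_cons, ht] using this
      · have := hq i
        simpa [List.mem_cons] using this
    · rintro ⟨j, r⟩ hp
      simp only [Finset.mem_product] at hp
      have hj0 : j i = 0 := by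
        have := hp.1
        simp only [boxOn, Fintype.mem_piFinset, Finset.mem_range] at this
        have h2 := this i
        simp [hiL] at h2
        omega
      ext t
      · by_cases ht : t = i
        · subst ht; simp [hj0]
        · simp [Function.update_of_ne ht]
      · simp
    · intro q hq
      funext t
      by_cases ht : t = i
      · subst ht; simp
      · simp [Function.update_of_ne ht]
    · rintro ⟨j, r⟩ hp
      simp only [Finset.mem_product, Finset.mem_range] at hp
      have hj0 : j i = 0 := by
        have := hp.1
        simp only [boxOn, Fintype.mem_piFinset, Finset.mem_range] at this
        have h2 := this i
        simp [hiL] at h2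
        omega
      have hcoef : (∏ t, ((ℓ t).choose (j t) : ℝ)) * ((ℓ i).choose r : ℝ)
          = ∏ t, ((ℓ t).choose (Function.update j i r t) : ℝ) := by
        rw [← Finset.mul_prod_erase Finset.univ
            (fun t => ((ℓ t).choose (Function.update j i r t) : ℝ)) (Finset.mem_univ i),
          ← Finset.mul_prod_erase Finset.univ
            (fun t => ((ℓ t).choose (j t) : ℝ)) (Finset.mem_univ i)]
        rw [Function.update_self, hj0]
        have : ∀ t ∈ Finset.univ.erase i,
            ((ℓ t).choose (Function.update j i r t) : ℝ) = ((ℓ t).choose (j t) : ℝ) := by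
          intro t ht
          rw [Function.update_of_ne (Finset.mem_erase.mp ht).1]
        rw [Finset.prod_congr rfl this]
        simp [mul_comm]
      rw [hcoef]

lemma mderiv_eq_Dsuf (ℓ : Fin n → ℕ) (f : (Fin n → ℝ) → ℝ) :
    mderiv ℓ f = Dsuf (List.finRange n) ℓ f := rfl

lemma pderiv'_def (i : Fin n) (f : (Fin n → ℝ) → ℝ) (y : Fin n → ℝ) :
    pderiv' i f y = fderiv ℝ f y (Pi.single i 1) := rfl

lemma mderiv_contDiff (ℓ : Fin n → ℕ) {f : (Fin n → ℝ) → ℝ}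
    (hf : ContDiff ℝ (⊤ : ℕ∞) f) : ContDiff ℝ (⊤ : ℕ∞) (mderiv ℓ f) := by
  rw [mderiv_eq_Dsuf]; exact Dsuf_contDiff _ _ hf

lemma mderiv_add (ℓ : Fin n → ℕ) {f g : (Fin n → ℝ) → ℝ}
    (hf : ContDiff ℝ (⊤ : ℕ∞) f) (hg : ContDiff ℝ (⊤ : ℕ∞) g) :
    mderiv ℓ (fun y => f y + g y) = fun y => mderiv ℓ f y + mderiv ℓ g y := by
  rw [mderiv_eq_Dsuf, mderiv_eq_Dsuf, mderiv_eq_Dsuf]; exact Dsuf_add _ _ hf hg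

lemma mderiv_sub (ℓ : Fin n → ℕ) {f g : (Fin n → ℝ) → ℝ}
    (hf : ContDiff ℝ (⊤ : ℕ∞) f) (hg : ContDiff ℝ (⊤ : ℕ∞) g) :
    mderiv ℓ (fun y => f y - g y) = fun y => mderiv ℓ f y - mderiv ℓ g y := by
  rw [mderiv_eq_Dsuf, mderiv_eq_Dsuf, mderiv_eq_Dsuf]; exact Dsuf_sub _ _ hf hg

lemma mderiv_const_mul (ℓ : Fin n → ℕ) (c : ℝ) {f : (Fin n → ℝ) → ℝ}
    (hf : ContDiff ℝ (⊤ : ℕ∞) f) :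
    mderiv ℓ (fun y => c * f y) = fun y => c * mderiv ℓ f y := by
  rw [mderiv_eq_Dsuf, mderiv_eq_Dsuf]; exact Dsuf_const_mul _ _ c hf

lemma mderiv_sum (ℓ : Fin n → ℕ) {ι : Type*} (A : Finset ι)
    (F : ι → (Fin n → ℝ) → ℝ) (hF : ∀ t ∈ A, ContDiff ℝ (⊤ : ℕ∞) (F t)) :
    mderiv ℓ (fun y => ∑ t ∈ A, F t y) = fun y => ∑ t ∈ A, mderiv ℓ (F t) y := by
  rw [mderiv_eq_Dsuf]
  rw [Dsuf_sum _ _ A F hF]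
  funext y
  refine Finset.sum_congr rfl fun t _ => ?_
  rw [mderiv_eq_Dsuf]

noncomputable def box (ℓ : Fin n → ℕ) : Finset (Fin n → ℕ) :=
  Fintype.piFinset fun t => Finset.range (ℓ t + 1)

lemma boxOn_finRange (ℓ : Fin n → ℕ) : boxOn (List.finRange n) ℓ = box ℓ := by
  unfold boxOn box
  congr 1
  funext i
  simp [List.mem_finRange]

lemma mderiv_leibniz (ℓ : Fin n → ℕ) {f g : (Fin n → ℝ) → ℝ}
    (hf : ContDiff ℝ (⊤ : ℕ∞) f) (hg : ContDiff ℝ (⊤ : ℕ∞) g) :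
    mderiv ℓ (fun y => f y * g y)
      = fun y => ∑ j ∈ box ℓ, (∏ t, ((ℓ t).choose (j t) : ℝ))
          * (mderiv j f y * mderiv (fun t => ℓ t - j t) g y) := by
  rw [mderiv_eq_Dsuf, Dsuf_leibniz (List.nodup_finRange n) ℓ hf hg, boxOn_finRange]
  funext y
  refine Finset.sum_congr rfl fun j _ => ?_
  rw [mderiv_eq_Dsuf, mderiv_eq_Dsuf]


noncomputable def mon (x : Fin n → ℝ) (m : Fin n → ℕ) : (Fin n → ℝ) → ℝ :=
  fun y => ∏ t, (y t - x t) ^ m t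

lemma mon_contDiff (x : Fin n → ℝ) (m : Fin n → ℕ) : ContDiff ℝ (⊤ : ℕ∞) (mon x m) := by
  unfold mon
  apply contDiff_prod
  intro t _
  exact (((ContinuousLinearMap.proj t : (Fin n → ℝ) →L[ℝ] ℝ).contDiff).sub contDiff_const).pow _

lemma pderiv'_mon (x : Fin n → ℝ) (m : Fin n → ℕ) (i : Fin n) :
    pderiv' i (mon x m)
      = fun y => (m i : ℝ) * mon x (Function.update m i (m i - 1)) y := by
  funext y
  rw [pderiv'_def]
  have hder : ∀ t : Fin n, HasFDerivAt (fun y : Fin n → ℝ => (y t - x t) ^ m t)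
      (((m t : ℝ) * (y t - x t) ^ (m t - 1)) • (ContinuousLinearMap.proj t :
        (Fin n → ℝ) →L[ℝ] ℝ)) y := by
    intro t
    have h0 : HasFDerivAt (fun y : Fin n → ℝ => y t)
        (ContinuousLinearMap.proj t : (Fin n → ℝ) →L[ℝ] ℝ) y :=
      (ContinuousLinearMap.proj t : (Fin n → ℝ) →L[ℝ] ℝ).hasFDerivAt
    have h1 : HasFDerivAt (fun y : Fin n → ℝ => y t - x t)
        (ContinuousLinearMap.proj t : (Fin n → ℝ) →L[ℝ] ℝ) y :=
      h0.sub_const (x t)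
    have h2 : HasDerivAt (fun z : ℝ => z ^ m t) ((m t : ℝ) * (y t - x t) ^ (m t - 1))
        (y t - x t) := hasDerivAt_pow (m t) (y t - x t)
    exact h2.comp_hasFDerivAt y h1
  have hfd : HasFDerivAt (mon x m)
      (∑ t, (∏ u ∈ Finset.univ.erase t, (y u - x u) ^ m u) •
        (((m t : ℝ) * (y t - x t) ^ (m t - 1)) • (ContinuousLinearMap.proj t :
          (Fin n → ℝ) →L[ℝ] ℝ))) y := by
    exact HasFDerivAt.finset_prod fun t _ => hder t
  rw [hfd.fderiv]
  rw [ContinuousLinearMap.sum_apply]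
  rw [Finset.sum_eq_single i]
  · simp only [ContinuousLinearMap.smul_apply, ContinuousLinearMap.proj_apply,
      Pi.single_eq_same, smul_eq_mul, mul_one]
    have hmon : mon x (Function.update m i (m i - 1)) y
        = (y i - x i) ^ (m i - 1) * ∏ u ∈ Finset.univ.erase i, (y u - x u) ^ m u := by
      unfold mon
      rw [← Finset.mul_prod_erase Finset.univ _ (Finset.mem_univ i), Function.update_self]
      congr 1
      refine Finset.prod_congr rfl fun u hu => ?_
      rw [Function.update_of_ne (Finset.mem_erase.mp hu).1]
    rw [hmon]
    ring
  · intro t _ hti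
    simp [Pi.single_eq_of_ne hti]
  · simp


lemma iter_mon (x : Fin n → ℝ) (m : Fin n → ℕ) (i : Fin n) (k : ℕ) :
    (pderiv' i)^[k] (mon x m)
      = fun y => ((m i).descFactorial k : ℝ) * mon x (Function.update m i (m i - k)) y := by
  induction k with
  | zero =>
    simp only [Function.iterate_zero, id_eq, Nat.descFactorial_zero, Nat.cast_one, one_mul,
      Nat.sub_zero, Function.update_eq_self]
  | succ k ih =>
    rw [Function.iterate_succ_apply', ih,
      pderiv'_const_mul _ (smdiff (mon_contDiff x (Function.update m i (m i - k)))) i,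
      pderiv'_mon x (Function.update m i (m i - k)) i]
    funext y
    simp only [Function.update_self, Function.update_idem]
    have h1 : m i - k - 1 = m i - (k + 1) := by omega
    have h2 : ((m i).descFactorial (k + 1) : ℝ)
        = ((m i).descFactorial k : ℝ) * ((m i - k : ℕ) : ℝ) := by
      rw [Nat.descFactorial_succ]
      push_cast
      ring
    rw [h1, h2]
    ring


lemma Dsuf_cons' (i : Fin n) (L : List (Fin n)) (ℓ : Fin n → ℕ) (f : (Fin n → ℝ) → ℝ) :
    Dsuf (i :: L) ℓ f = (pderiv' i)^[ℓ i] (Dsuf L ℓ f) := rfl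

lemma Dsuf_mon (x : Fin n → ℝ) {L : List (Fin n)} (hL : L.Nodup) (ℓ m : Fin n → ℕ) :
    Dsuf L ℓ (mon x m)
      = fun y => (∏ t ∈ L.toFinset, ((m t).descFactorial (ℓ t) : ℝ))
          * mon x (fun t => if t ∈ L then m t - ℓ t else m t) y := by
  induction L with
  | nil =>
    funext y
    simp only [List.toFinset_nil, Finset.prod_empty, one_mul, List.not_mem_nil, if_false]
    rfl
  | cons i L ih =>
    have hiL : i ∉ L := (List.nodup_cons.mp hL).1
    have hLnd : L.Nodup := (List.nodup_cons.mp hL).2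
    rw [Dsuf_cons', ih hLnd,
      iter_const_mul _ (mon_contDiff x _) i (ℓ i), iter_mon x _ i (ℓ i)]
    funext y
    have hmi : (fun t => if t ∈ L then m t - ℓ t else m t) i = m i := by simp [hiL]
    have hupd : Function.update (fun t => if t ∈ L then m t - ℓ t else m t) i
        ((fun t => if t ∈ L then m t - ℓ t else m t) i - ℓ i)
        = fun t => if t ∈ i :: L then m t - ℓ t else m t := by
      funext t
      by_cases ht : t = i
      · subst ht; simp [hiL]
      · simp [Function.update_of_ne ht, List.mem_cons, ht]
    have hprod : ∏ t ∈ (i :: L).toFinset, ((m t).descFactorial (ℓ t) : ℝ)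
        = ((m i).descFactorial (ℓ i) : ℝ) * ∏ t ∈ L.toFinset, ((m t).descFactorial (ℓ t) : ℝ) := by
      rw [List.toFinset_cons, Finset.prod_insert (by simpa using hiL)]
    rw [hprod, hupd]
    simp only [hiL, if_false]
    ring

lemma mon_self (x : Fin n → ℝ) (m : Fin n → ℕ) :
    mon x m x = if m = fun _ => 0 then 1 else 0 := by
  unfold mon
  by_cases h : m = fun _ => 0
  · subst h; simp
  · rw [if_neg h]
    have : ∃ t, m t ≠ 0 := by
      by_contra hc
      push_neg at hc
      exact h (funext hc)
    obtain ⟨t, ht⟩ := this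
    apply Finset.prod_eq_zero (Finset.mem_univ t)
    simp [zero_pow ht]


lemma mderiv_mon (x : Fin n → ℝ) (ℓ m : Fin n → ℕ) :
    mderiv ℓ (mon x m) x = if ℓ = m then ∏ t, ((m t).factorial : ℝ) else 0 := by
  rw [mderiv_eq_Dsuf, Dsuf_mon x (List.nodup_finRange n) ℓ m]
  have hmem : ∀ t : Fin n, t ∈ List.finRange n := List.mem_finRange
  simp only [hmem, if_true]
  rw [mon_self]
  have htf : (List.finRange n).toFinset = Finset.univ := by
    ext t; simp [hmem]
  rw [htf]
  by_cases h : ℓ = m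
  · subst h
    simp [Nat.descFactorial_self]
  · rw [if_neg h]
    by_cases h2 : (fun t => m t - ℓ t) = fun _ => 0
    · -- then ∀ t, m t ≤ ℓ t; since ℓ ≠ m there is t with ℓ t > m t, so descFactorial = 0
      rw [if_pos h2]
      have hle : ∀ t, m t ≤ ℓ t := fun t => by
        have := congrFun h2 t
        have h5 : m t - ℓ t = 0 := this
        omega
      have : ∃ t, m t < ℓ t := by
        by_contra hc
        push_neg at hc
        exact h (funext fun t => by have h3 := hc t; have h4 := hle t; omega)
      obtain ⟨t, ht⟩ := this
      rw [Finset.prod_eq_zero (Finset.mem_univ t)]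
      · ring
      · simp [Nat.descFactorial_eq_zero_iff_lt.mpr ht]
    · rw [if_neg h2, mul_zero]














abbrev cnd (s : Fin n → ℕ) (γ : ℝ) (ℓ : Fin n → ℕ) : Prop :=
  (∑ i, (s i * ℓ i : ℝ)) < γ

noncomputable def fact (ℓ : Fin n → ℕ) : ℝ := ∏ i, ((ℓ i).factorial : ℝ)

lemma fact_ne_zero (ℓ : Fin n → ℕ) : fact ℓ ≠ 0 :=
  Finset.prod_ne_zero_iff.mpr fun i _ => Nat.cast_ne_zero.mpr (Nat.factorial_ne_zero _)

lemma cnd_bound {s : Fin n → ℕ} (hs : ∀ i, 0 < s i) {γ : ℝ} {ℓ : Fin n → ℕ}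
    (h : cnd s γ ℓ) (i : Fin n) : ℓ i < ⌈γ⌉₊ := by
  rw [Nat.lt_ceil]
  calc (ℓ i : ℝ) ≤ (s i : ℝ) * (ℓ i : ℝ) := by
        have h1 : (1 : ℝ) ≤ (s i : ℝ) := by exact_mod_cast hs i
        nlinarith [Nat.cast_nonneg (α := ℝ) (ℓ i)]
    _ ≤ ∑ t, (s t * ℓ t : ℝ) := by
        apply Finset.single_le_sum (f := fun t => ((s t : ℝ) * (ℓ t : ℝ)))
          (fun t _ => by positivity) (Finset.mem_univ i)
    _ < γ := h

/-- tjet as a finite sum over any big-enough box. -/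
lemma tjet_eq_sum {s : Fin n → ℕ} (hs : ∀ i, 0 < s i) (γ : ℝ) (x : Fin n → ℝ)
    (f : (Fin n → ℝ) → ℝ) {N : ℕ} (hN : ⌈γ⌉₊ ≤ N) (y : Fin n → ℝ) :
    tjet s γ x f y
      = ∑ ℓ ∈ Fintype.piFinset (fun _ : Fin n => Finset.range N),
          (if cnd s γ ℓ then mderiv ℓ f x / fact ℓ else 0) * mon x ℓ y := by
  unfold tjet
  rw [finsum_eq_sum_of_support_subset _ (s := Fintype.piFinset fun _ : Fin n => Finset.range N)]
  · refine Finset.sum_congr rfl fun ℓ _ => ?_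
    by_cases h : cnd s γ ℓ
    · rw [if_pos h, if_pos h]
      unfold mon fact
      ring
    · rw [if_neg h, if_neg h, zero_mul]
  · intro ℓ hℓ
    have hne := hℓ
    by_cases h : cnd s γ ℓ
    · simp only [Finset.mem_coe, Fintype.mem_piFinset, Finset.mem_range]
      intro i
      exact lt_of_lt_of_le (cnd_bound hs h i) hN
    · exact absurd (if_neg h) hℓ

lemma tjet_contDiff {s : Fin n → ℕ} (hs : ∀ i, 0 < s i) (γ : ℝ) (x : Fin n → ℝ)
    {f : (Fin n → ℝ) → ℝ} : ContDiff ℝ (⊤ : ℕ∞) (tjet s γ x f) := by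
  have : tjet s γ x f = fun y => ∑ ℓ ∈ Fintype.piFinset (fun _ : Fin n => Finset.range ⌈γ⌉₊),
      (if cnd s γ ℓ then mderiv ℓ f x / fact ℓ else 0) * mon x ℓ y := by
    funext y
    exact tjet_eq_sum hs γ x f (le_refl _) y
  rw [this]
  exact ContDiff.sum fun ℓ _ => contDiff_const.mul (mon_contDiff x ℓ)

lemma mderiv_tjet {s : Fin n → ℕ} (hs : ∀ i, 0 < s i) (γ : ℝ) (x : Fin n → ℝ)
    {f : (Fin n → ℝ) → ℝ} (hf : ContDiff ℝ (⊤ : ℕ∞) f) (j : Fin n → ℕ) :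
    mderiv j (tjet s γ x f) x = if cnd s γ j then mderiv j f x else 0 := by
  have h1 : tjet s γ x f = fun y => ∑ ℓ ∈ Fintype.piFinset (fun _ : Fin n => Finset.range ⌈γ⌉₊),
      (if cnd s γ ℓ then mderiv ℓ f x / fact ℓ else 0) * mon x ℓ y := by
    funext y
    exact tjet_eq_sum hs γ x f (le_refl _) y
  rw [h1, mderiv_sum j _ _ (fun ℓ _ => contDiff_const.mul (mon_contDiff x ℓ))]
  have h2 : ∀ ℓ ∈ Fintype.piFinset (fun _ : Fin n => Finset.range ⌈γ⌉₊),
      mderiv j (fun y => (if cnd s γ ℓ then mderiv ℓ f x / fact ℓ else 0) * mon x ℓ y) x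
        = (if cnd s γ ℓ then mderiv ℓ f x / fact ℓ else 0) * mderiv j (mon x ℓ) x := by
    intro ℓ _
    rw [mderiv_const_mul j _ (mon_contDiff x ℓ)]
  beta_reduce
  rw [Finset.sum_congr rfl h2]
  by_cases hj : j ∈ Fintype.piFinset (fun _ : Fin n => Finset.range ⌈γ⌉₊)
  · rw [Finset.sum_eq_single j]
    · rw [mderiv_mon, if_pos rfl]
      by_cases h : cnd s γ j
      · rw [if_pos h, if_pos h]
        have : (∏ t, ((j t).factorial : ℝ)) = fact j := rfl
        rw [this]
        field_simp
        rw [mul_div_assoc, div_self (fact_ne_zero j), mul_one]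
      · rw [if_neg h, if_neg h, zero_mul]
    · intro ℓ _ hℓj
      rw [mderiv_mon, if_neg (Ne.symm hℓj), mul_zero]
    · intro hcon
      exact absurd hj hcon
  · have hcond : ¬ cnd s γ j := by
      intro h
      exact hj (by
        simp only [Fintype.mem_piFinset, Finset.mem_range]
        exact fun i => cnd_bound hs h i)
    rw [if_neg hcond]
    apply Finset.sum_eq_zero
    intro ℓ _
    rw [mderiv_mon]
    by_cases hℓj : j = ℓ
    · subst hℓj
      exact absurd hj (by simp_all)
    · rw [if_neg hℓj, mul_zero]




lemma cnd_split {s : Fin n → ℕ} {α β : ℝ} {k j : Fin n → ℕ} (hjk : ∀ t, j t ≤ k t)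
    (hk : cnd s (α + β) k) (hα : ¬ cnd s α j) (hβ : ¬ cnd s β (fun t => k t - j t)) :
    False := by
  unfold cnd at *
  push_neg at hα hβ
  have hsum : (∑ i, (s i * (fun t => k t - j t) i : ℝ))
      = (∑ i, (s i * k i : ℝ)) - (∑ i, (s i * j i : ℝ)) := by
    rw [← Finset.sum_sub_distrib]
    refine Finset.sum_congr rfl fun t _ => ?_
    have : ((k t - j t : ℕ) : ℝ) = (k t : ℝ) - (j t : ℝ) := by
      rw [Nat.cast_sub (hjk t)]
    simp only [this]
    ring
  rw [hsum] at hβ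
  linarith

lemma cnd_add {s : Fin n → ℕ} {α β : ℝ} {ℓ m : Fin n → ℕ}
    (hα : cnd s α ℓ) (hβ : cnd s β m) : cnd s (α + β) (fun t => ℓ t + m t) := by
  unfold cnd at *
  have : (∑ i, (s i * (fun t => ℓ t + m t) i : ℝ))
      = (∑ i, (s i * ℓ i : ℝ)) + (∑ i, (s i * m i : ℝ)) := by
    rw [← Finset.sum_add_distrib]
    refine Finset.sum_congr rfl fun t _ => ?_
    push_cast
    ring
  rw [this]
  linarith

lemma mon_add (x : Fin n → ℝ) (ℓ m : Fin n → ℕ) (y : Fin n → ℝ) :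
    mon x (fun t => ℓ t + m t) y = mon x ℓ y * mon x m y := by
  unfold mon
  rw [← Finset.prod_mul_distrib]
  exact Finset.prod_congr rfl fun t _ => pow_add _ _ _

lemma choose_fact (ℓ m : Fin n → ℕ) :
    (∏ t, (((fun t => ℓ t + m t) t).choose (ℓ t) : ℝ)) * (fact ℓ * fact m)
      = fact (fun t => ℓ t + m t) := by
  unfold fact
  rw [← Finset.prod_mul_distrib, ← Finset.prod_mul_distrib]
  refine Finset.prod_congr rfl fun t _ => ?_
  have h1 := Nat.add_choose_mul_factorial_mul_factorial (m t) (ℓ t)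
  rw [Nat.add_comm (m t) (ℓ t)] at h1
  have h2 : (((ℓ t + m t).choose (ℓ t) : ℝ)) * ((m t).factorial : ℝ) * ((ℓ t).factorial : ℝ)
      = ((ℓ t + m t).factorial : ℝ) := by exact_mod_cast h1
  beta_reduce
  rw [← h2]
  ring

theorem tjet_rotaBaxter_family_extended' {s : Fin n → ℕ}
    (hs : ∀ i, 0 < s i) (x : Fin n → ℝ)
    (f g : (Fin n → ℝ) → ℝ)
    (hf : ContDiff ℝ (⊤ : ℕ∞) f) (hg : ContDiff ℝ (⊤ : ℕ∞) g) :
    ∀ (α β : ℝ) (y : Fin n → ℝ),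
          tjet s α x f y * tjet s β x g y
            = tjet s (α + β) x
                (fun z => tjet s α x f z * g z + f z * tjet s β x g z - f z * g z)
                y := by
  intro α β y
  have hNα : ⌈α⌉₊ ≤ ⌈α⌉₊ + ⌈β⌉₊ := Nat.le_add_right _ _
  have hNβ : ⌈β⌉₊ ≤ ⌈α⌉₊ + ⌈β⌉₊ := Nat.le_add_left _ _
  have hNab : ⌈α + β⌉₊ ≤ ⌈α⌉₊ + ⌈β⌉₊ := by
    apply Nat.ceil_le.mpr
    push_cast
    have h1 := Nat.le_ceil α
    have h2 := Nat.le_ceil β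
    linarith
  rw [tjet_eq_sum hs α x f hNα y, tjet_eq_sum hs β x g hNβ y,
    tjet_eq_sum hs (α + β) x _ hNab y]
  set P := tjet s α x f with hP
  set Q := tjet s β x g with hQ
  have hPc : ContDiff ℝ (⊤ : ℕ∞) P := tjet_contDiff hs α x
  have hQc : ContDiff ℝ (⊤ : ℕ∞) Q := tjet_contDiff hs β x
  set N := ⌈α⌉₊ + ⌈β⌉₊ with hN
  set B := Fintype.piFinset (fun _ : Fin n => Finset.range N) with hB
  set a : (Fin n → ℕ) → ℝ := fun ℓ => mderiv ℓ f x with ha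
  set b : (Fin n → ℕ) → ℝ := fun m => mderiv m g x with hb
  -- the RHS coefficient computation
  have hmder : ∀ k : Fin n → ℕ, cnd s (α + β) k →
      mderiv k (fun z => P z * g z + f z * Q z - f z * g z) x
        = ∑ j ∈ box k, (∏ t, ((k t).choose (j t) : ℝ))
            * (if cnd s α j ∧ cnd s β (fun t => k t - j t)
                then a j * b (fun t => k t - j t) else 0) := by
    intro k hk
    have e1 := mderiv_sub (n := n) k
      (f := fun z => P z * g z + f z * Q z) (g := fun z => f z * g z)
      ((hPc.mul hg).add (hf.mul hQc)) (hf.mul hg)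
    have e2 := mderiv_add (n := n) k (f := fun z => P z * g z) (g := fun z => f z * Q z)
      (hPc.mul hg) (hf.mul hQc)
    have e3 := mderiv_leibniz (n := n) k (f := P) (g := g) hPc hg
    have e4 := mderiv_leibniz (n := n) k (f := f) (g := Q) hf hQc
    have e5 := mderiv_leibniz (n := n) k (f := f) (g := g) hf hg
    rw [e1]
    beta_reduce
    rw [e2]
    beta_reduce
    rw [e3, e4, e5]
    beta_reduce
    rw [← Finset.sum_add_distrib, ← Finset.sum_sub_distrib]
    refine Finset.sum_congr rfl fun j hj => ?_
    have hjk : ∀ t, j t ≤ k t := by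
      intro t
      have := (Fintype.mem_piFinset.mp hj) t
      rw [Finset.mem_range] at this
      omega
    rw [mderiv_tjet hs α x hf j, mderiv_tjet hs β x hg (fun t => k t - j t)]
    by_cases hα : cnd s α j
    · by_cases hβ : cnd s β (fun t => k t - j t)
      · rw [if_pos hα, if_pos hβ, if_pos ⟨hα, hβ⟩]
        ring
      · rw [if_pos hα, if_neg hβ, if_neg (show ¬(cnd s α j ∧ cnd s β fun t => k t - j t) from fun hcc => hβ hcc.2)]
        ring
    · by_cases hβ : cnd s β (fun t => k t - j t)
      · rw [if_neg hα, if_pos hβ, if_neg (show ¬(cnd s α j ∧ cnd s β fun t => k t - j t) from fun hcc => hα hcc.1)]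
        ring
      · exact (cnd_split hjk hk hα hβ).elim
  rw [Finset.sum_mul_sum]
  -- LHS into filtered form
  have lhs_eq : ∑ ℓ ∈ B, ∑ m ∈ B,
        ((if cnd s α ℓ then mderiv ℓ f x / fact ℓ else 0) * mon x ℓ y)
          * ((if cnd s β m then mderiv m g x / fact m else 0) * mon x m y)
      = ∑ p ∈ (B ×ˢ B).filter (fun p => cnd s α p.1 ∧ cnd s β p.2),
          a p.1 * b p.2 / (fact p.1 * fact p.2) * (mon x p.1 y * mon x p.2 y) := by
    rw [Finset.sum_filter, ← Finset.sum_product']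
    refine Finset.sum_congr rfl fun p _ => ?_
    by_cases h1 : cnd s α p.1
    · by_cases h2 : cnd s β p.2
      · rw [if_pos h1, if_pos h2, if_pos ⟨h1, h2⟩]
        simp only [ha, hb]
        ring
      · rw [if_pos h1, if_neg h2, if_neg (show ¬(cnd s α p.1 ∧ cnd s β p.2) from fun hcc => h2 hcc.2)]
        ring
    · rw [if_neg h1, if_neg (show ¬(cnd s α p.1 ∧ cnd s β p.2) from fun hcc => h1 hcc.1)]
      ring
  rw [lhs_eq]
  -- RHS into filtered form
  have rhs_eq : ∑ k ∈ B,
        (if cnd s (α+β) k then mderiv k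
            (fun z => P z * g z + f z * Q z - f z * g z) x / fact k else 0) * mon x k y
      = ∑ q ∈ (B ×ˢ B).filter (fun q => cnd s (α+β) q.1 ∧ cnd s α q.2
            ∧ cnd s β (fun t => q.1 t - q.2 t) ∧ ∀ t, q.2 t ≤ q.1 t),
          (∏ t, ((q.1 t).choose (q.2 t) : ℝ)) * a q.2 * b (fun t => q.1 t - q.2 t)
            / fact q.1 * mon x q.1 y := by
    rw [Finset.sum_filter, Finset.sum_product]
    refine Finset.sum_congr rfl fun k hkB => ?_
    by_cases hk : cnd s (α+β) k
    · rw [if_pos hk, hmder k hk]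
      -- expand box k to B
      have hsub : box k ⊆ B := by
        intro j hj
        simp only [hB, Fintype.mem_piFinset, Finset.mem_range] at *
        intro t
        have h1 := (Fintype.mem_piFinset.mp hj) t
        rw [Finset.mem_range] at h1
        have h2 := cnd_bound hs hk t
        omega
      have hzero : ∀ j ∈ B, j ∉ box k →
          (∏ t, ((k t).choose (j t) : ℝ))
            * (if cnd s α j ∧ cnd s β (fun t => k t - j t)
                then a j * b (fun t => k t - j t) else 0) = 0 := by
        intro j _ hjbox
        have : ∃ t, k t < j t := by
          by_contra hc
          push_neg at hc
          exact hjbox (by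
            simp only [box, Fintype.mem_piFinset, Finset.mem_range]
            intro t
            have h3 := hc t
            omega)
        obtain ⟨t, ht⟩ := this
        have : ((k t).choose (j t) : ℝ) = 0 := by
          rw [Nat.choose_eq_zero_of_lt ht]
          norm_num
        rw [Finset.prod_eq_zero (Finset.mem_univ t) this, zero_mul]
      rw [Finset.sum_subset hsub hzero]
      rw [Finset.sum_div, Finset.sum_mul]
      refine Finset.sum_congr rfl fun j hj => ?_
      by_cases hjle : ∀ t, j t ≤ k t
      · by_cases hcc : cnd s α j ∧ cnd s β (fun t => k t - j t)
        · rw [if_pos hcc, if_pos ⟨hk, hcc.1, hcc.2, hjle⟩]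
          ring
        · rw [if_neg hcc, if_neg (show ¬(cnd s (α+β) k ∧ cnd s α j ∧ (cnd s β fun t => k t - j t) ∧ ∀ t, j t ≤ k t) from fun hq => hcc ⟨hq.2.1, hq.2.2.1⟩)]
          ring
      · push_neg at hjle
        obtain ⟨t, ht⟩ := hjle
        have hc0 : ((k t).choose (j t) : ℝ) = 0 := by
          rw [Nat.choose_eq_zero_of_lt ht]
          norm_num
        rw [Finset.prod_eq_zero (Finset.mem_univ t) hc0,
          if_neg (show ¬(cnd s (α+β) k ∧ cnd s α j ∧ (cnd s β fun t => k t - j t) ∧ ∀ t, j t ≤ k t) from fun hq => absurd (hq.2.2.2 t) (by omega))]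
        ring
    · rw [if_neg hk, zero_mul]
      apply (Finset.sum_eq_zero ?_).symm
      intro j _
      rw [if_neg (show ¬(cnd s (α+β) k ∧ cnd s α j ∧ (cnd s β fun t => k t - j t) ∧ ∀ t, j t ≤ k t) from fun hq => hk hq.1)]
  rw [rhs_eq]
  refine Finset.sum_nbij' (fun p => ((fun t => p.1 t + p.2 t), p.1))
    (fun q => (q.2, fun t => q.1 t - q.2 t)) ?_ ?_ ?_ ?_ ?_
  · rintro ⟨ℓ, m⟩ hp
    rw [Finset.mem_filter, Finset.mem_product] at hp
    obtain ⟨⟨hℓB, hmB⟩, hα, hβ⟩ := hp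
    have hab := cnd_add hα hβ
    rw [Finset.mem_filter, Finset.mem_product]
    have hm' : (fun t => (fun t => ℓ t + m t) t - ℓ t) = m :=
      funext fun t => by show ℓ t + m t - ℓ t = m t; omega
    refine ⟨⟨?_, hℓB⟩, hab, hα, ?_, fun t => by show ℓ t ≤ ℓ t + m t; omega⟩
    · rw [hB, Fintype.mem_piFinset]
      intro t
      rw [Finset.mem_range]
      exact lt_of_lt_of_le (cnd_bound hs hab t) hNab
    · rw [hm']
      exact hβ
  · rintro ⟨k, j⟩ hq
    rw [Finset.mem_filter, Finset.mem_product] at hq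
    simp only [Prod.fst, Prod.snd] at hq ⊢
    obtain ⟨⟨hkB, hjB⟩, hab, hα, hβ, hle⟩ := hq
    rw [Finset.mem_filter, Finset.mem_product]
    refine ⟨⟨hjB, ?_⟩, hα, hβ⟩
    rw [hB, Fintype.mem_piFinset] at hkB ⊢
    intro t
    have h5 := hkB t
    rw [Finset.mem_range] at h5 ⊢
    show k t - j t < N
    omega
  · rintro ⟨ℓ, m⟩ _
    refine Prod.ext rfl ?_
    funext t
    show ℓ t + m t - ℓ t = m t
    omega
  · rintro ⟨k, j⟩ hq
    rw [Finset.mem_filter, Finset.mem_product] at hq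
    simp only [Prod.fst, Prod.snd] at hq
    obtain ⟨⟨hkB, hjB⟩, hab, hα, hβ, hle⟩ := hq
    refine Prod.ext ?_ rfl
    funext t
    have h5 := hle t
    show j t + (k t - j t) = k t
    omega
  · rintro ⟨ℓ, m⟩ hp
    rw [Finset.mem_filter, Finset.mem_product] at hp
    obtain ⟨⟨hℓB, hmB⟩, hα, hβ⟩ := hp
    have hm' : (fun t => (fun t => ℓ t + m t) t - ℓ t) = m :=
      funext fun t => by show ℓ t + m t - ℓ t = m t; omega
    beta_reduce
    rw [hm', mon_add x ℓ m y]
    have hcf := choose_fact ℓ m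
    have h1 : fact ℓ ≠ 0 := fact_ne_zero ℓ
    have h2 : fact m ≠ 0 := fact_ne_zero m
    have h12 : fact (fun t => ℓ t + m t) ≠ 0 := fact_ne_zero _
    field_simp
    rw [← hcf]
    ring

end RB

/-- with the Taylor jet extended by `T_{α,x,·} = 0` for
`α ≤ 0` (which the definition below satisfies automatically, as recorded in
the first conjunct), the Rota–Baxter family identity
`T_{α,x,·}(f)·T_{β,x,·}(g) = T_{α+β,x,·}(T_{α,x,·}(f)·g + f·T_{β,x,·}(g) − fg)`
holds for all real `α, β`, also when `α` or `β` is nonpositive. -/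
theorem tjet_rotaBaxter_family_extended {d : ℕ} (s : Fin (d + 1) → ℕ)
    (hs : ∀ i, 0 < s i) (x : Fin (d + 1) → ℝ)
    (f g : (Fin (d + 1) → ℝ) → ℝ)
    (hf : ContDiff ℝ (⊤ : ℕ∞) f) (hg : ContDiff ℝ (⊤ : ℕ∞) g) :
    (∀ γ : ℝ, γ ≤ 0 → ∀ (h : (Fin (d + 1) → ℝ) → ℝ) (y : Fin (d + 1) → ℝ),
        tjet s γ x h y = 0)
      ∧ ∀ (α β : ℝ) (y : Fin (d + 1) → ℝ),
          tjet s α x f y * tjet s β x g y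
            = tjet s (α + β) x
                (fun z => tjet s α x f z * g z + f z * tjet s β x g z - f z * g z)
                y := by
  constructor
  · intro γ hγ h y
    apply finsum_eq_zero_of_forall_eq_zero
    intro ℓ
    rw [if_neg]
    intro hlt
    have h0 : (0:ℝ) ≤ ∑ i, ((s i : ℝ) * (ℓ i : ℝ)) :=
      Finset.sum_nonneg fun i _ => by positivity
    linarith
  · exact RB.tjet_rotaBaxter_family_extended' hs x f g hf hg
end
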